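/- arXiv:1710.10009 — 4 statements merged into one kernel-verified Lean document; each statement's English description precedes it below -/
import Mathlib

section
/- For every unital C*-algebra D, surj_0(D) ≤ csr(D) (as elements of ℕ ∪ {∞}). That is, if m ≥ csr(D) then the map of pointed sets π_0(GL_{m-1}(D)) → π_0(GL_m(D)) induced by the stabilization map θ_D is surjective. -/
open scoped unitInterval

noncomputable section

/-- The set of left unimodular vectors in `A^m`. -/
def Lg (m : ℕ) (A : Type*) [Ring A] : Set (Fin m → A) :=
  {v | ∃ w : Fin m → A, ∑ i, w i * v i = 1}

/-- `GL_m(A)` acts transitively on `Lg_m(A)`. -/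
def GLtrans (m : ℕ) (A : Type*) [Ring A] : Prop :=
  ∀ v ∈ Lg m A, ∀ w ∈ Lg m A,
    ∃ M : Matrix (Fin m) (Fin m) A, IsUnit M ∧ M.mulVec v = w

/-- The general stable rank: the least `n ≥ 1` such that `GL_m(A)` acts transitively on
`Lg_m(A)` for all `m ≥ n` (and `∞` if no such `n` exists). -/
def gsr (A : Type*) [Ring A] : ℕ∞ :=
  sInf {N : ℕ∞ | ∃ n : ℕ, N = n ∧ 1 ≤ n ∧ ∀ m : ℕ, n ≤ m → GLtrans m A}

/-- The connected stable rank: the least `n ≥ 1` such that `Lg_m(A)` is connected for all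
`m ≥ n` (and `∞` if no such `n` exists). -/
def csr (A : Type*) [Ring A] [TopologicalSpace A] : ℕ∞ :=
  sInf {N : ℕ∞ | ∃ n : ℕ, N = n ∧ 1 ≤ n ∧ ∀ m : ℕ, n ≤ m → IsConnected (Lg m A)}

/-- Invertible `m × m` matrices over `A`, topologized as a subspace of the matrices. -/
abbrev GLs (m : ℕ) (A : Type*) [Ring A] : Type _ :=
  {M : Matrix (Fin m) (Fin m) A // IsUnit M}

/-- The identity matrix as base point of `GL_m(A)`. -/
def GLone (m : ℕ) (A : Type*) [Ring A] : GLs m A := ⟨1, isUnit_one⟩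

/-- The stabilization map `M ↦ diag(M, 1)` on matrices. -/
def stab {A : Type*} [Ring A] {n : ℕ} (M : Matrix (Fin n) (Fin n) A) :
    Matrix (Fin (n + 1)) (Fin (n + 1)) A :=
  (Matrix.fromBlocks M 0 0 (1 : Matrix (Fin 1) (Fin 1) A)).submatrix
    finSumFinEquiv.symm finSumFinEquiv.symm

theorem stab_one {A : Type*} [Ring A] {n : ℕ} :
    stab (1 : Matrix (Fin n) (Fin n) A) = 1 := by
  rw [stab, Matrix.fromBlocks_one, Matrix.submatrix_one_equiv]

theorem stab_mul {A : Type*} [Ring A] {n : ℕ} (M N : Matrix (Fin n) (Fin n) A) :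
    stab M * stab N = stab (M * N) := by
  rw [stab, stab, stab, Matrix.submatrix_mul_equiv, Matrix.fromBlocks_multiply]
  simp

theorem stab_isUnit {A : Type*} [Ring A] {n : ℕ} {M : Matrix (Fin n) (Fin n) A}
    (h : IsUnit M) : IsUnit (stab M) := by
  obtain ⟨u, rfl⟩ := h
  refine isUnit_iff_exists.mpr ⟨stab (u⁻¹ : (Matrix (Fin n) (Fin n) A)ˣ).val, ?_, ?_⟩
  · rw [stab_mul, Units.mul_inv, stab_one]
  · rw [stab_mul, Units.inv_mul, stab_one]

theorem continuous_stab {A : Type*} [Ring A] [TopologicalSpace A] {n : ℕ} :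
    Continuous fun M : Matrix (Fin n) (Fin n) A => stab M := by
  unfold stab
  exact (continuous_id.matrix_fromBlocks continuous_const continuous_const
    continuous_const).matrix_submatrix _ _

/-- The stabilization map `θ : GL_n(A) → GL_{n+1}(A)`, `M ↦ diag(M, 1)`. -/
def stabGL {A : Type*} [Ring A] {n : ℕ} (M : GLs n A) : GLs (n + 1) A :=
  ⟨stab M.1, stab_isUnit M.2⟩

theorem stabGL_one {A : Type*} [Ring A] {n : ℕ} :
    stabGL (GLone n A) = GLone (n + 1) A :=
  Subtype.ext stab_one

theorem continuous_stabGL {A : Type*} [Ring A] [TopologicalSpace A] {n : ℕ} :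
    Continuous (stabGL (A := A) (n := n)) :=
  Continuous.subtype_mk (continuous_stab.comp continuous_subtype_val) _

/-- Stabilization as a continuous map `GL_n(A) → GL_{n+1}(A)`. -/
def stabCM (n : ℕ) (A : Type*) [Ring A] [TopologicalSpace A] :
    ContinuousMap (GLs n A) (GLs (n + 1) A) :=
  ⟨stabGL, continuous_stabGL⟩

theorem stabCM_one {A : Type*} [Ring A] [TopologicalSpace A] {n : ℕ} :
    stabCM n A (GLone n A) = GLone (n + 1) A :=
  stabGL_one

/-- Push a generalized loop forward along a based continuous map. -/
def GenLoop.push {N X Y : Type*} [TopologicalSpace X] [TopologicalSpace Y]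
    {x : X} {y : Y} (f : ContinuousMap X Y) (hf : f x = y)
    (p : GenLoop N X x) : GenLoop N Y y :=
  ⟨f.comp p.1, fun t ht => by
    simp only [ContinuousMap.comp_apply]
    rw [p.2 t ht, hf]⟩

/-- The map `π_k(GL_m(A)) → π_k(GL_{m+1}(A))` (based at the identity matrices) induced by
the stabilization map is injective. -/
def pikInj (k : ℕ) (A : Type*) [Ring A] [TopologicalSpace A] (m : ℕ) : Prop :=
  ∀ a b : GenLoop (Fin k) (GLs m A) (GLone m A),
    GenLoop.Homotopic (GenLoop.push (stabCM m A) stabCM_one a)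
      (GenLoop.push (stabCM m A) stabCM_one b) → GenLoop.Homotopic a b

/-- The map `π_k(GL_m(A)) → π_k(GL_{m+1}(A))` (based at the identity matrices) induced by
the stabilization map is surjective. -/
def pikSurj (k : ℕ) (A : Type*) [Ring A] [TopologicalSpace A] (m : ℕ) : Prop :=
  ∀ b : GenLoop (Fin k) (GLs (m + 1) A) (GLone (m + 1) A),
    ∃ a : GenLoop (Fin k) (GLs m A) (GLone m A),
      GenLoop.Homotopic (GenLoop.push (stabCM m A) stabCM_one a) b

/-- `inj_k(A)`: the least `n ≥ 1` such that `π_k(GL_{m-1}(A)) → π_k(GL_m(A))` is injective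
for all `m ≥ n` (and `∞` if no such `n` exists). -/
def injRank (k : ℕ) (A : Type*) [Ring A] [TopologicalSpace A] : ℕ∞ :=
  sInf {N : ℕ∞ | ∃ n : ℕ, N = n ∧ 1 ≤ n ∧ ∀ m : ℕ, n ≤ m + 1 → pikInj k A m}

/-- `surj_k(A)`: the least `n ≥ 1` such that `π_k(GL_{m-1}(A)) → π_k(GL_m(A))` is surjective
for all `m ≥ n` (and `∞` if no such `n` exists). -/
def surjRank (k : ℕ) (A : Type*) [Ring A] [TopologicalSpace A] : ℕ∞ :=
  sInf {N : ℕ∞ | ∃ n : ℕ, N = n ∧ 1 ≤ n ∧ ∀ m : ℕ, n ≤ m + 1 → pikSurj k A m}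


section AuxAlg
open Matrix

variable {D : Type*} [Ring D] {n : ℕ}

theorem vmv_mul_vmv (c w c' w' : Fin n → D) :
    vecMulVec c w * vecMulVec c' w' = vecMulVec c (fun j => (∑ k, w k * c' k) * w' j) := by
  ext i j
  simp only [Matrix.mul_apply, vecMulVec_apply]
  calc ∑ k, (c i * w k) * (c' k * w' j) = ∑ k, c i * ((w k * c' k) * w' j) := by
        refine Finset.sum_congr rfl fun k _ => by noncomm_ring
    _ = c i * ((∑ k, w k * c' k) * w' j) := by
        rw [← Finset.mul_sum, Finset.sum_mul]

theorem one_add_vmv_mul {c w : Fin n → D} {r : D}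
    (hr1 : r * (1 + ∑ i, w i * c i) = 1) (hr2 : (1 + ∑ i, w i * c i) * r = 1) :
    (1 + vecMulVec c w) * (1 - vecMulVec c fun j => r * w j) = 1 ∧
      (1 - vecMulVec c (fun j => r * w j)) * (1 + vecMulVec c w) = 1 := by
  set s := ∑ i, w i * c i with hs
  have hOO' : vecMulVec c w * vecMulVec c (fun j => r * w j)
      = vecMulVec c (fun j => s * (r * w j)) := by rw [vmv_mul_vmv]
  have hO'O : vecMulVec c (fun j => r * w j) * vecMulVec c w
      = vecMulVec c (fun j => r * (s * w j)) := by
    rw [vmv_mul_vmv]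
    ext i j
    simp only [vecMulVec_apply]
    rw [show (∑ k, r * w k * c k) = r * s from by
      rw [hs, Finset.mul_sum]; exact Finset.sum_congr rfl fun k _ => mul_assoc _ _ _,
      mul_assoc]
  constructor
  · have expand : (1 + vecMulVec c w) * (1 - vecMulVec c fun j => r * w j)
        = 1 + (vecMulVec c w - vecMulVec c (fun j => r * w j)
            - vecMulVec c w * vecMulVec c (fun j => r * w j)) := by noncomm_ring
    rw [expand, hOO']
    have hz : vecMulVec c w - vecMulVec c (fun j => r * w j)
        - vecMulVec c (fun j => s * (r * w j)) = 0 := by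
      ext i j
      simp only [Matrix.sub_apply, vecMulVec_apply, Matrix.zero_apply]
      have hw : w j = r * w j + s * (r * w j) := by
        calc w j = ((1 + s) * r) * w j := by rw [hr2, one_mul]
          _ = r * w j + s * (r * w j) := by noncomm_ring
      have h0 : w j - (r * w j + s * (r * w j)) = 0 := sub_eq_zero.mpr hw
      calc c i * w j - c i * (r * w j) - c i * (s * (r * w j))
          = c i * (w j - (r * w j + s * (r * w j))) := by noncomm_ring
        _ = 0 := by rw [h0, mul_zero]
    rw [hz, add_zero]
  · have expand : (1 - vecMulVec c (fun j => r * w j)) * (1 + vecMulVec c w)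
        = 1 + (vecMulVec c w - vecMulVec c (fun j => r * w j)
            - vecMulVec c (fun j => r * w j) * vecMulVec c w) := by noncomm_ring
    rw [expand, hO'O]
    have hz : vecMulVec c w - vecMulVec c (fun j => r * w j)
        - vecMulVec c (fun j => r * (s * w j)) = 0 := by
      ext i j
      simp only [Matrix.sub_apply, vecMulVec_apply, Matrix.zero_apply]
      have hw : w j = r * w j + r * (s * w j) := by
        calc w j = (r * (1 + s)) * w j := by rw [hr1, one_mul]
          _ = r * w j + r * (s * w j) := by noncomm_ring
      have h0 : w j - (r * w j + r * (s * w j)) = 0 := sub_eq_zero.mpr hw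
      calc c i * w j - c i * (r * w j) - c i * (r * (s * w j))
          = c i * (w j - (r * w j + r * (s * w j))) := by noncomm_ring
        _ = 0 := by rw [h0, mul_zero]
    rw [hz, add_zero]

theorem isUnit_one_add_vmv {c w : Fin n → D} (h : IsUnit (1 + ∑ i, w i * c i)) :
    IsUnit (1 + vecMulVec c w) := by
  have hr1 := h.unit.inv_mul
  have hr2 := h.unit.mul_inv
  rw [h.unit_spec] at hr1 hr2
  obtain ⟨p1, p2⟩ := one_add_vmv_mul hr1 hr2
  exact isUnit_iff_exists.mpr ⟨_, p1, p2⟩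

theorem mulVec_one_add_vmv (c w v : Fin n → D) :
    (1 + vecMulVec c w) *ᵥ v = fun i => v i + c i * ∑ j, w j * v j := by
  funext i
  rw [Matrix.add_mulVec, Matrix.one_mulVec]
  simp only [Pi.add_apply, mulVec, dotProduct, vecMulVec_apply]
  rw [Finset.mul_sum]
  congr 1
  exact Finset.sum_congr rfl fun j _ => mul_assoc _ _ _

end AuxAlg

section StabEntries
variable {A : Type*} [Ring A] {n : ℕ}

theorem stab_cc (M : Matrix (Fin n) (Fin n) A) (i j : Fin n) :
    stab M i.castSucc j.castSucc = M i j := by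
  simp only [stab, Matrix.submatrix_apply]
  rw [show i.castSucc = Fin.castAdd 1 i from rfl, show j.castSucc = Fin.castAdd 1 j from rfl,
    finSumFinEquiv_symm_apply_castAdd, finSumFinEquiv_symm_apply_castAdd,
    Matrix.fromBlocks_apply₁₁]

theorem stab_cl (M : Matrix (Fin n) (Fin n) A) (i : Fin n) :
    stab M i.castSucc (Fin.last n) = 0 := by
  simp only [stab, Matrix.submatrix_apply]
  rw [show i.castSucc = Fin.castAdd 1 i from rfl, finSumFinEquiv_symm_apply_castAdd,
    finSumFinEquiv_symm_last, Matrix.fromBlocks_apply₁₂, Matrix.zero_apply]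

theorem stab_lc (M : Matrix (Fin n) (Fin n) A) (j : Fin n) :
    stab M (Fin.last n) j.castSucc = 0 := by
  simp only [stab, Matrix.submatrix_apply]
  rw [show j.castSucc = Fin.castAdd 1 j from rfl, finSumFinEquiv_symm_apply_castAdd,
    finSumFinEquiv_symm_last, Matrix.fromBlocks_apply₂₁, Matrix.zero_apply]

theorem stab_ll (M : Matrix (Fin n) (Fin n) A) :
    stab M (Fin.last n) (Fin.last n) = 1 := by
  simp only [stab, Matrix.submatrix_apply]
  rw [finSumFinEquiv_symm_last, Matrix.fromBlocks_apply₂₂, Matrix.one_apply_eq]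

theorem isUnit_of_stab_isUnit {M : Matrix (Fin n) (Fin n) A} (h : IsUnit (stab M)) :
    IsUnit M := by
  set C : Matrix (Fin (n + 1)) (Fin (n + 1)) A := (h.unit⁻¹).val with hC
  have h1 : stab M * C = 1 := by have := h.unit.mul_inv; rwa [h.unit_spec] at this
  have h2 : C * stab M = 1 := by have := h.unit.inv_mul; rwa [h.unit_spec] at this
  have h1' : ∀ i j, (stab M * C) i j = (1 : Matrix (Fin (n + 1)) (Fin (n + 1)) A) i j :=
    fun i j => by rw [h1]
  have h2' : ∀ i j, (C * stab M) i j = (1 : Matrix (Fin (n + 1)) (Fin (n + 1)) A) i j :=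
    fun i j => by rw [h2]
  refine isUnit_iff_exists.mpr ⟨Matrix.of fun i j => C i.castSucc j.castSucc, ?_, ?_⟩
  · ext i j
    have e := h1' i.castSucc j.castSucc
    rw [Matrix.mul_apply, Fin.sum_univ_castSucc] at e
    simp only [stab_cc, stab_cl, zero_mul, add_zero] at e
    rw [Matrix.mul_apply]
    simp only [Matrix.of_apply]
    rw [e, Matrix.one_apply, Matrix.one_apply]
    simp [Fin.castSucc_inj]
  · ext i j
    have e := h2' i.castSucc j.castSucc
    rw [Matrix.mul_apply, Fin.sum_univ_castSucc] at e
    simp only [stab_cc, stab_lc, mul_zero, add_zero] at e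
    rw [Matrix.mul_apply]
    simp only [Matrix.of_apply]
    rw [e, Matrix.one_apply, Matrix.one_apply]
    simp [Fin.castSucc_inj]

end StabEntries

section AuxCStar
open Matrix
variable {D : Type*} [CStarAlgebra D]

/-- A radius small enough for all the perturbation arguments. -/
def eps (D : Type*) [CStarAlgebra D] : ℝ := (2 * (‖(1 : D)‖ + 1))⁻¹

theorem eps_pos : 0 < eps D := by
  have : (0:ℝ) < 2 * (‖(1 : D)‖ + 1) := by positivity
  exact inv_pos.mpr this

theorem eps_le_half : eps D ≤ 1 / 2 := by
  rw [eps, show (1:ℝ)/2 = 2⁻¹ by norm_num]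
  apply inv_anti₀ (by norm_num)
  nlinarith [norm_nonneg (1 : D)]

theorem eps_lt_one : eps D < 1 := lt_of_le_of_lt eps_le_half (by norm_num)

theorem isUnit_one_add_of_norm_lt_one {x : D} (h : ‖x‖ < 1) : IsUnit (1 + x) := by
  have h' : ‖-x‖ < 1 := by simpa using h
  have := (Units.oneSub (-x) h').isUnit
  rwa [Units.val_oneSub, sub_neg_eq_add] at this

theorem glsMul_joined {n : ℕ} {a b c d : GLs n D} (h1 : Joined a b) (h2 : Joined c d) :
    Joined (⟨a.1 * c.1, a.2.mul c.2⟩ : GLs n D) ⟨b.1 * d.1, b.2.mul d.2⟩ := by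
  obtain ⟨p⟩ := h1
  obtain ⟨q⟩ := h2
  refine ⟨⟨⟨fun t => ⟨(p t).1 * (q t).1, (p t).2.mul (q t).2⟩, ?_⟩, ?_, ?_⟩⟩
  · exact ((continuous_subtype_val.comp p.continuous).matrix_mul
      (continuous_subtype_val.comp q.continuous)).subtype_mk _
  · exact Subtype.ext (by show (p 0).1 * (q 0).1 = a.1 * c.1; rw [p.source, q.source])
  · exact Subtype.ext (by show (p 1).1 * (q 1).1 = b.1 * d.1; rw [p.target, q.target])

theorem joined_one_add_vmv {n : ℕ} (c w : Fin n → D)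
    (h : ∀ t : ℝ, 0 ≤ t → t ≤ 1 →
      IsUnit ((1 : Matrix (Fin n) (Fin n) D) + vecMulVec (t • c) w)) :
    Joined (GLone n D)
      (⟨1 + vecMulVec c w, by simpa using h 1 zero_le_one le_rfl⟩ : GLs n D) := by
  refine ⟨⟨⟨fun t => ⟨1 + vecMulVec ((t : ℝ) • c) w, h t t.2.1 t.2.2⟩, ?_⟩, ?_, ?_⟩⟩
  · refine Continuous.subtype_mk ?_ _
    refine continuous_matrix fun i j => ?_
    simp only [Matrix.add_apply, vecMulVec_apply, Pi.smul_apply]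
    exact continuous_const.add
      (((continuous_subtype_val.smul continuous_const)).mul continuous_const)
  · refine Subtype.ext ?_
    show (1 : Matrix (Fin n) (Fin n) D) + vecMulVec (((0 : I) : ℝ) • c) w = 1
    have : (((0 : I) : ℝ) • c) = 0 := by simp
    rw [this]
    ext i j
    simp [vecMulVec_apply]
  · refine Subtype.ext ?_
    show (1 : Matrix (Fin n) (Fin n) D) + vecMulVec (((1 : I) : ℝ) • c) w
        = 1 + vecMulVec c w
    simp

theorem step_lemma {n : ℕ} {v' w' : Fin n → D} (h1 : ∑ i, w' i * v' i = 1)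
    {v'' : Fin n → D} (hs : ‖∑ i, w' i * (v'' i - v' i)‖ < eps D) :
    (∃ h : GLs n D, Joined (GLone n D) h ∧ h.1 *ᵥ v' = v'') ∧
    (∃ h : GLs n D, Joined (GLone n D) h ∧ h.1 *ᵥ v'' = v') ∧ v'' ∈ Lg n D := by
  classical
  set c : Fin n → D := fun i => v'' i - v' i with hc
  set s : D := ∑ i, w' i * c i with hsdef
  have hs' : ‖s‖ < eps D := hs
  have hs1 : ‖s‖ < 1 := lt_trans hs' eps_lt_one
  have hu : IsUnit (1 + s) := isUnit_one_add_of_norm_lt_one hs1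
  set r : D := ((hu.unit⁻¹ : Dˣ) : D) with hrdef
  have hr1 : r * (1 + s) = 1 := by
    have := hu.unit.inv_mul; rwa [hu.unit_spec] at this
  have hr2 : (1 + s) * r = 1 := by
    have := hu.unit.mul_inv; rwa [hu.unit_spec] at this
  have hrn : ‖r‖ ≤ 2 * ‖(1 : D)‖ := by
    have h' : r + r * s = 1 := by rw [← hr1, mul_add, mul_one]
    have hid : r = 1 - r * s := eq_sub_of_add_eq h'
    have hb : ‖r‖ ≤ ‖(1 : D)‖ + ‖r‖ * ‖s‖ := by
      calc ‖r‖ = ‖1 - r * s‖ := by rw [← hid]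
        _ ≤ ‖(1 : D)‖ + ‖r * s‖ := norm_sub_le _ _
        _ ≤ ‖(1 : D)‖ + ‖r‖ * ‖s‖ := by
            exact add_le_add le_rfl (norm_mul_le r s)
    have hhalf : ‖s‖ ≤ 1 / 2 := le_trans hs'.le eps_le_half
    nlinarith [norm_nonneg r, norm_nonneg s, norm_nonneg (1 : D)]
  have hE : eps D * (2 * (‖(1 : D)‖ + 1)) = 1 := by
    rw [eps]
    exact inv_mul_cancel₀ (by positivity)
  have hrs : ‖r * s‖ < 1 := by
    have t1 : ‖r * s‖ ≤ ‖r‖ * ‖s‖ := norm_mul_le _ _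
    have t2 : ‖r‖ * ‖s‖ ≤ (2 * ‖(1 : D)‖) * ‖s‖ :=
      mul_le_mul_of_nonneg_right hrn (norm_nonneg s)
    have t3 : (2 * ‖(1 : D)‖) * ‖s‖ ≤ (2 * ‖(1 : D)‖) * eps D :=
      mul_le_mul_of_nonneg_left hs'.le (by positivity)
    have t4 : (2 * ‖(1 : D)‖) * eps D < 1 := by nlinarith [eps_pos (D := D)]
    linarith
  -- forward perturbation
  have hsum0 : ∀ t : ℝ, ∑ i, w' i * (t • c) i = t • s := by
    intro t
    rw [hsdef, Finset.smul_sum]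
    refine Finset.sum_congr rfl fun i _ => ?_
    rw [Pi.smul_apply]
    exact mul_smul_comm t (w' i) (c i)
  have hUnits1 : ∀ t : ℝ, 0 ≤ t → t ≤ 1 →
      IsUnit ((1 : Matrix (Fin n) (Fin n) D) + vecMulVec (t • c) w') := by
    intro t ht0 ht1
    apply isUnit_one_add_vmv
    rw [hsum0 t]
    apply isUnit_one_add_of_norm_lt_one
    rw [norm_smul, Real.norm_eq_abs, abs_of_nonneg ht0]
    nlinarith [norm_nonneg s]
  have hJ1 := joined_one_add_vmv c w' hUnits1
  have hmv1 : ((1 : Matrix (Fin n) (Fin n) D) + vecMulVec c w') *ᵥ v' = v'' := by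
    rw [mulVec_one_add_vmv, h1]
    funext i
    rw [mul_one, hc]
    show v' i + (v'' i - v' i) = v'' i
    abel
  -- the left inverse of v''
  have hsum2 : ∑ i, w' i * v'' i = 1 + s := by
    rw [hsdef, ← h1, ← Finset.sum_add_distrib]
    refine Finset.sum_congr rfl fun i _ => ?_
    rw [hc]
    show w' i * v'' i = w' i * v' i + w' i * (v'' i - v' i)
    rw [mul_sub]
    abel
  have hleftinv : ∑ i, (r * w' i) * v'' i = 1 := by
    calc ∑ i, (r * w' i) * v'' i = r * ∑ i, w' i * v'' i := by
          rw [Finset.mul_sum]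
          exact Finset.sum_congr rfl fun i _ => mul_assoc _ _ _
      _ = r * (1 + s) := by rw [hsum2]
      _ = 1 := hr1
  -- backward perturbation
  have hcsum : ∑ i, (r * w' i) * (v' i - v'' i) = -(r * s) := by
    have e1 : ∑ i, w' i * (v' i - v'' i) = -s := by
      rw [hsdef, ← Finset.sum_neg_distrib]
      refine Finset.sum_congr rfl fun i _ => ?_
      rw [hc]
      show w' i * (v' i - v'' i) = -(w' i * (v'' i - v' i))
      rw [mul_sub, mul_sub]
      abel
    calc ∑ i, (r * w' i) * (v' i - v'' i) = r * ∑ i, w' i * (v' i - v'' i) := by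
          rw [Finset.mul_sum]
          exact Finset.sum_congr rfl fun i _ => mul_assoc _ _ _
      _ = -(r * s) := by rw [e1, mul_neg]
  have hUnits2 : ∀ t : ℝ, 0 ≤ t → t ≤ 1 →
      IsUnit ((1 : Matrix (Fin n) (Fin n) D)
        + vecMulVec (t • fun i => v' i - v'' i) (fun j => r * w' j)) := by
    intro t ht0 ht1
    apply isUnit_one_add_vmv
    have : ∑ i, (r * w' i) * ((t • fun i => v' i - v'' i) i) = t • (-(r * s)) := by
      rw [← hcsum, Finset.smul_sum]
      refine Finset.sum_congr rfl fun i _ => ?_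
      rw [Pi.smul_apply]
      exact mul_smul_comm t _ _
    rw [this]
    apply isUnit_one_add_of_norm_lt_one
    rw [norm_smul, Real.norm_eq_abs, abs_of_nonneg ht0, norm_neg]
    nlinarith [norm_nonneg (r * s)]
  have hJ2 := joined_one_add_vmv (fun i => v' i - v'' i) (fun j => r * w' j) hUnits2
  have hmv2 : ((1 : Matrix (Fin n) (Fin n) D)
      + vecMulVec (fun i => v' i - v'' i) (fun j => r * w' j)) *ᵥ v'' = v' := by
    rw [mulVec_one_add_vmv, hleftinv]
    funext i
    rw [mul_one]
    show v'' i + (v' i - v'' i) = v' i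
    abel
  exact ⟨⟨_, hJ1, hmv1⟩, ⟨_, hJ2, hmv2⟩, ⟨fun j => r * w' j, hleftinv⟩⟩

theorem lg_of_reach {n : ℕ} {v : Fin n → D} (hv : v ∈ Lg n D) (g : GLs n D) :
    g.1 *ᵥ v ∈ Lg n D := by
  obtain ⟨w₀, hw₀⟩ := hv
  refine ⟨w₀ ᵥ* (g.2.unit⁻¹).val, ?_⟩
  have hinv : (g.2.unit⁻¹).val * g.1 = 1 := by
    have := g.2.unit.inv_mul; rwa [g.2.unit_spec] at this
  show (w₀ ᵥ* _) ⬝ᵥ (g.1 *ᵥ v) = 1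
  rw [Matrix.dotProduct_mulVec, Matrix.vecMul_vecMul, hinv, Matrix.vecMul_one]
  exact hw₀

theorem reach_of_connected {n : ℕ} (hcon : IsConnected (Lg n D))
    {v v₁ : Fin n → D} (hv : v ∈ Lg n D) (hv₁ : v₁ ∈ Lg n D) :
    ∃ g : GLs n D, Joined (GLone n D) g ∧ g.1 *ᵥ v = v₁ := by
  classical
  set T := {x : Fin n → D | ∃ g : GLs n D, Joined (GLone n D) g ∧ g.1 *ᵥ v = x} with hT
  have hTLg : T ⊆ Lg n D := by rintro x ⟨g, hg, rfl⟩; exact lg_of_reach hv g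
  let LW : (Fin n → D) → (Fin n → D) := fun x => if h : x ∈ Lg n D then h.choose else 0
  have hLW : ∀ x (h : x ∈ Lg n D), ∑ i, LW x i * x i = 1 := by
    intro x h
    simp only [LW, dif_pos h]
    exact h.choose_spec
  let U : (Fin n → D) → Set (Fin n → D) :=
    fun x => {y | ‖∑ i, LW x i * (y i - x i)‖ < eps D}
  have hUopen : ∀ x, IsOpen (U x) := by
    intro x
    have hcont : Continuous fun y : Fin n → D => ∑ i, LW x i * (y i - x i) :=
      continuous_finset_sum _ fun i _ =>
        continuous_const.mul ((continuous_apply i).sub continuous_const)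
    have he : U x = (fun y : Fin n → D => ∑ i, LW x i * (y i - x i)) ⁻¹'
        (Metric.ball 0 (eps D)) := by
      ext y
      simp [U, Metric.mem_ball, dist_zero_right]
    rw [he]
    exact Metric.isOpen_ball.preimage hcont
  have hmemU : ∀ x, x ∈ U x := by
    intro x
    show ‖∑ i, LW x i * (x i - x i)‖ < eps D
    simp [eps_pos]
  have hcomp : ∀ (h g : GLs n D), Joined (GLone n D) h → Joined (GLone n D) g →
      ∃ k : GLs n D, Joined (GLone n D) k ∧ k.1 = h.1 * g.1 := by
    intro h g hh hg
    refine ⟨⟨h.1 * g.1, h.2.mul g.2⟩, ?_, rfl⟩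
    have hthis := glsMul_joined hh hg
    have e : (⟨(GLone n D).1 * (GLone n D).1, (GLone n D).2.mul (GLone n D).2⟩ : GLs n D)
        = GLone n D := Subtype.ext (one_mul _)
    rwa [e] at hthis
  have hTopen : IsOpen T := by
    rw [isOpen_iff_forall_mem_open]
    intro x hx
    refine ⟨U x, ?_, hUopen x, hmemU x⟩
    intro y hy
    have hxLg : x ∈ Lg n D := hTLg hx
    obtain ⟨g, hg, hgv⟩ := hx
    obtain ⟨⟨h, hh, hmv⟩, -, -⟩ := step_lemma (hLW x hxLg) hy
    obtain ⟨k, hk, hkval⟩ := hcomp h g hh hg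
    exact ⟨k, hk, by rw [hkval, ← Matrix.mulVec_mulVec, hgv]; exact hmv⟩
  set V := ⋃ x ∈ (Lg n D \ T), U x with hV
  have hVopen : IsOpen V := isOpen_biUnion fun x _ => hUopen x
  have hdisj : ∀ y, y ∈ T → y ∉ V := by
    rintro y ⟨g, hg, hgv⟩ hyV
    obtain ⟨x, hxmem, hyU⟩ := Set.mem_iUnion₂.mp hyV
    obtain ⟨hxLg, hxT⟩ := hxmem
    obtain ⟨-, ⟨h, hh, hmv⟩, -⟩ := step_lemma (hLW x hxLg) hyU
    obtain ⟨k, hk, hkval⟩ := hcomp h g hh hg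
    exact hxT ⟨k, hk, by rw [hkval, ← Matrix.mulVec_mulVec, hgv]; exact hmv⟩
  by_cases hvt : v₁ ∈ T
  · exact hvt
  · exfalso
    have hcover : Lg n D ⊆ T ∪ V := by
      intro x hx
      by_cases h : x ∈ T
      · exact Or.inl h
      · exact Or.inr (Set.mem_biUnion ⟨hx, h⟩ (hmemU x))
    have hvT : v ∈ T := ⟨GLone n D, Joined.refl _, Matrix.one_mulVec v⟩
    have h1 : (Lg n D ∩ T).Nonempty := ⟨v, hv, hvT⟩
    have h2 : (Lg n D ∩ V).Nonempty := ⟨v₁, hv₁, Set.mem_biUnion ⟨hv₁, hvt⟩ (hmemU v₁)⟩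
    obtain ⟨z, hzLg, hzT, hzV⟩ := hcon.isPreconnected T V hTopen hVopen hcover h1 h2
    exact hdisj z hzT hzV

theorem exists_joined_stab {m : ℕ} (hcon : IsConnected (Lg (m + 1) D)) (B : GLs (m + 1) D) :
    ∃ a : GLs m D, Joined (stabGL a) B := by
  classical
  have hBinv1 : (B.2.unit⁻¹).val * B.1 = 1 := by
    have := B.2.unit.inv_mul; rwa [B.2.unit_spec] at this
  have hvLg : (fun i => B.1 i (Fin.last m)) ∈ Lg (m + 1) D := by
    refine ⟨fun i => (B.2.unit⁻¹).val (Fin.last m) i, ?_⟩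
    rw [show (∑ i, (B.2.unit⁻¹).val (Fin.last m) i * B.1 i (Fin.last m))
        = ((B.2.unit⁻¹).val * B.1) (Fin.last m) (Fin.last m) from (Matrix.mul_apply).symm,
      hBinv1, Matrix.one_apply_eq]
  have heLg : (fun i : Fin (m + 1) => if i = Fin.last m then (1 : D) else 0) ∈ Lg (m + 1) D := by
    refine ⟨fun i => if i = Fin.last m then 1 else 0, ?_⟩
    simp
  obtain ⟨g, hgJ, hgv⟩ := reach_of_connected hcon hvLg heLg
  set M : Matrix (Fin (m + 1)) (Fin (m + 1)) D := g.1 * B.1 with hM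
  have hMu : IsUnit M := g.2.mul B.2
  have hJ1 : Joined B (⟨M, hMu⟩ : GLs (m + 1) D) := by
    have hthis := glsMul_joined hgJ (Joined.refl B)
    have e : (⟨(GLone (m + 1) D).1 * B.1, (GLone (m + 1) D).2.mul B.2⟩ : GLs (m + 1) D) = B :=
      Subtype.ext (one_mul _)
    rw [e] at hthis
    exact hthis.trans (Joined.refl _)
  have hcol : ∀ i, M i (Fin.last m) = if i = Fin.last m then 1 else 0 := by
    intro i
    have e : M i (Fin.last m) = (g.1 *ᵥ fun k => B.1 k (Fin.last m)) i := by
      rw [hM, Matrix.mul_apply]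
      rfl
    rw [e, hgv]
  set a : Matrix (Fin m) (Fin m) D := Matrix.of (fun i j => M i.castSucc j.castSucc) with ha
  set e : Fin (m + 1) → D := (fun i => if i = Fin.last m then (1 : D) else 0) with he
  set x : Fin (m + 1) → D := (fun j => if j = Fin.last m then 0 else M (Fin.last m) j) with hx
  have hek : ∀ k : Fin m, e k.castSucc = 0 := fun k => by
    simp only [he]
    exact if_neg (Fin.castSucc_lt_last k).ne
  have hel : e (Fin.last m) = 1 := by simp [he]
  have hxl : x (Fin.last m) = 0 := by simp [hx]
  have hxc : ∀ j' : Fin m, x j'.castSucc = M (Fin.last m) j'.castSucc := fun j' => by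
    simp only [hx]
    exact if_neg (Fin.castSucc_lt_last j').ne
  have hfact : M = stab a * ((1 : Matrix (Fin (m + 1)) (Fin (m + 1)) D) + vecMulVec e x) := by
    ext i j
    rw [Matrix.mul_apply, Fin.sum_univ_castSucc]
    induction i using Fin.lastCases with
    | last =>
      simp only [stab_lc, zero_mul, Finset.sum_const_zero, zero_add, stab_ll, one_mul,
        Matrix.add_apply, vecMulVec_apply, hel]
      induction j using Fin.lastCases with
      | last => rw [hcol, if_pos rfl, Matrix.one_apply_eq, hxl, add_zero]
      | cast j' =>
        rw [Matrix.one_apply_ne (Fin.castSucc_lt_last j').ne', hxc, zero_add]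
    | cast i' =>
      simp only [stab_cc, stab_cl, zero_mul, add_zero, Matrix.add_apply, vecMulVec_apply, hek,
        mul_zero, add_zero, mul_add]
      induction j using Fin.lastCases with
      | last =>
        rw [hcol, if_neg (Fin.castSucc_lt_last i').ne,
          Finset.sum_eq_zero fun k _ => by simp [Matrix.one_apply_ne (Fin.castSucc_lt_last k).ne]]
      | cast j' =>
        simp only [Matrix.one_apply, Fin.castSucc_inj, mul_ite, mul_one, mul_zero, mul_zero,
          add_zero, Finset.sum_ite_eq', Finset.mem_univ, if_true]
        rfl
  have hEu0 : ∀ t : ℝ, 0 ≤ t → t ≤ 1 →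
      IsUnit ((1 : Matrix (Fin (m + 1)) (Fin (m + 1)) D) + vecMulVec (t • e) x) := by
    intro t ht0 ht1
    apply isUnit_one_add_vmv
    have hz : ∑ i, x i * (t • e) i = 0 := by
      refine Finset.sum_eq_zero fun i _ => ?_
      rcases eq_or_ne i (Fin.last m) with h | h
      · subst h; rw [hxl, zero_mul]
      · rw [Pi.smul_apply, show e i = 0 from by simp only [he]; exact if_neg h, smul_zero,
          mul_zero]
    rw [hz, add_zero]
    exact isUnit_one
  have hJE := joined_one_add_vmv e x hEu0
  have hEu : IsUnit ((1 : Matrix (Fin (m + 1)) (Fin (m + 1)) D) + vecMulVec e x) := by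
    simpa using hEu0 1 zero_le_one le_rfl
  have hEinv : ((1 : Matrix (Fin (m + 1)) (Fin (m + 1)) D) + vecMulVec e x) * (hEu.unit⁻¹).val
      = 1 := by
    have := hEu.unit.mul_inv; rwa [hEu.unit_spec] at this
  have hstabu : IsUnit (stab a) := by
    have hsa : stab a = M * (hEu.unit⁻¹).val := by rw [hfact, mul_assoc, hEinv, mul_one]
    rw [hsa]
    exact hMu.mul (hEu.unit⁻¹).isUnit
  have hau : IsUnit a := isUnit_of_stab_isUnit hstabu
  refine ⟨⟨a, hau⟩, ?_⟩
  have hJ2 : Joined (stabGL ⟨a, hau⟩) (⟨M, hMu⟩ : GLs (m + 1) D) := by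
    have hthis := glsMul_joined (Joined.refl (stabGL ⟨a, hau⟩)) hJE
    have e1 : (⟨(stabGL (⟨a, hau⟩ : GLs m D)).1 * (GLone (m + 1) D).1,
        (stabGL (⟨a, hau⟩ : GLs m D)).2.mul (GLone (m + 1) D).2⟩ : GLs (m + 1) D)
        = stabGL ⟨a, hau⟩ := Subtype.ext (mul_one _)
    rw [e1] at hthis
    have e2 : (⟨M, hMu⟩ : GLs (m + 1) D)
        = ⟨(stabGL (⟨a, hau⟩ : GLs m D)).1 * ((1 : Matrix (Fin (m + 1)) (Fin (m + 1)) D)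
            + vecMulVec e x), (stabGL (⟨a, hau⟩ : GLs m D)).2.mul hEu⟩ :=
      Subtype.ext hfact
    rw [e2]
    exact hthis
  exact hJ2.trans hJ1.symm

end AuxCStar

theorem pikSurj_of_connected {D : Type*} [CStarAlgebra D] {m : ℕ}
    (hcon : IsConnected (Lg (m + 1) D)) : pikSurj 0 D m := by
  intro b
  haveI : Subsingleton (Fin 0 → I) := ⟨fun f g => funext fun i => i.elim0⟩
  obtain ⟨a, hJ⟩ := exists_joined_stab hcon (b.1 (fun i => i.elim0))
  refine ⟨⟨ContinuousMap.const _ a, fun y hy => by obtain ⟨i, -⟩ := hy; exact i.elim0⟩, ?_⟩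
  obtain ⟨γ⟩ := hJ
  refine ⟨⟨⟨⟨fun p => γ p.1, γ.continuous.comp continuous_fst⟩, ?_, ?_⟩, ?_⟩⟩
  · intro y
    show γ 0 = _
    rw [γ.source]
    rfl
  · intro y
    show γ 1 = _
    rw [γ.target]
    exact congrArg b.1 (Subsingleton.elim _ y)
  · intro t y hy
    obtain ⟨i, -⟩ := hy
    exact i.elim0


/-- **Theorem.** For every unital C*-algebra `D`, `surj_0(D) ≤ csr(D)`: if `m ≥ csr(D)`
then `π_0(GL_{m-1}(D)) → π_0(GL_m(D))` is surjective. -/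
theorem surjRank_zero_le_csr {D : Type*} [CStarAlgebra D] :
    surjRank 0 D ≤ csr D ∧ ∀ m : ℕ, csr D ≤ (m + 1 : ℕ) → pikSurj 0 D m := by
  constructor
  · show sInf {N : ℕ∞ | ∃ n : ℕ, N = n ∧ 1 ≤ n ∧ ∀ m : ℕ, n ≤ m + 1 → pikSurj 0 D m}
        ≤ sInf {N : ℕ∞ | ∃ n : ℕ, N = n ∧ 1 ≤ n ∧ ∀ m : ℕ, n ≤ m → IsConnected (Lg m D)}
    refine sInf_le_sInf ?_
    rintro N ⟨n, rfl, hn1, hall⟩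
    exact ⟨n, rfl, hn1, fun m hm => pikSurj_of_connected (hall (m + 1) hm)⟩
  · intro m hm
    have hm' : sInf {N : ℕ∞ | ∃ n : ℕ, N = n ∧ 1 ≤ n ∧
        ∀ k : ℕ, n ≤ k → IsConnected (Lg k D)} ≤ ((m + 1 : ℕ) : ℕ∞) := hm
    set S : Set ℕ∞ := {N : ℕ∞ | ∃ n : ℕ, N = n ∧ 1 ≤ n ∧
        ∀ k : ℕ, n ≤ k → IsConnected (Lg k D)} with hS
    have hne : S.Nonempty := by
      by_contra hS0
      rw [Set.not_nonempty_iff_eq_empty] at hS0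
      rw [hS0, sInf_empty, top_le_iff] at hm'
      exact (ENat.coe_ne_top (m + 1)) hm'
    obtain ⟨N, hNS, hNmin⟩ := wellFounded_lt.has_min S hne
    have hNle : N ≤ sInf S := le_sInf fun x hx => not_lt.mp (hNmin x hx)
    obtain ⟨n, rfl, hn1, hall⟩ := hNS
    have hcast : (n : ℕ∞) ≤ ((m + 1 : ℕ) : ℕ∞) := hNle.trans hm'
    have hn : n ≤ m + 1 := by exact_mod_cast hcast
    exact pikSurj_of_connected (hall (m + 1) hn)


end
end

section
/- For every unital C*-algebra D, inj_0(D) ≤ gsr(𝕋D) (as elements of ℕ ∪ {∞}), where 𝕋D = C(𝕋, D). That is, if m ≥ gsr(C(𝕋, D)) then the map of pointed sets π_0(GL_{m-1}(D)) → π_0(GL_m(D)) induced by the stabilization map θ_D is injective. -/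
open scoped unitInterval

noncomputable section

/-! ### Auxiliary lemmas -/

section AuxLemmas

open scoped Topology

/-- The unique point of the `0`-cube. -/
def cubeZeroPt : (Fin 0) → I := fun i => i.elim0

theorem genLoopZero_homotopic_iff {X : Type*} [TopologicalSpace X] {x : X}
    (a b : GenLoop (Fin 0) X x) :
    GenLoop.Homotopic a b ↔ Joined (a.1 cubeZeroPt) (b.1 cubeZeroPt) := by
  constructor
  · rintro ⟨H⟩
    exact ⟨⟨⟨fun t => H (t, cubeZeroPt),
      H.continuous.comp (continuous_id.prodMk continuous_const)⟩,
      H.apply_zero _, H.apply_one _⟩⟩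
  · rintro ⟨p⟩
    refine ⟨⟨⟨⟨fun q => p q.1, p.continuous.comp continuous_fst⟩, ?_, ?_⟩, ?_⟩⟩
    · intro y; rw [Subsingleton.elim y cubeZeroPt]; exact p.source
    · intro y; rw [Subsingleton.elim y cubeZeroPt]; exact p.target
    · rintro t y ⟨i, -⟩; exact i.elim0

section MatrixAux

variable {R : Type*} [Ring R] {n : ℕ}

theorem finSumFinEquiv_symm_castSucc (i : Fin n) :
    finSumFinEquiv.symm (i.castSucc) = Sum.inl i := by
  rw [Equiv.symm_apply_eq]
  exact (finSumFinEquiv_apply_left i)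

theorem finSumFinEquiv_symm_last' :
    finSumFinEquiv.symm (Fin.last n) = Sum.inr (0 : Fin 1) := by
  rw [Equiv.symm_apply_eq]
  rw [finSumFinEquiv_apply_right]
  ext
  simp

theorem stab_apply_cc (M : Matrix (Fin n) (Fin n) R) (i j : Fin n) :
    stab M i.castSucc j.castSucc = M i j := by
  simp [stab, Matrix.submatrix_apply, finSumFinEquiv_symm_castSucc]

theorem stab_apply_c_last (M : Matrix (Fin n) (Fin n) R) (i : Fin n) :
    stab M i.castSucc (Fin.last n) = 0 := by
  simp [stab, Matrix.submatrix_apply, finSumFinEquiv_symm_castSucc, finSumFinEquiv_symm_last']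

theorem stab_apply_last_c (M : Matrix (Fin n) (Fin n) R) (j : Fin n) :
    stab M (Fin.last n) j.castSucc = 0 := by
  simp [stab, Matrix.submatrix_apply, finSumFinEquiv_symm_castSucc, finSumFinEquiv_symm_last']

theorem stab_apply_last_last (M : Matrix (Fin n) (Fin n) R) :
    stab M (Fin.last n) (Fin.last n) = 1 := by
  simp [stab, Matrix.submatrix_apply, finSumFinEquiv_symm_last, Matrix.one_apply]

theorem stab_col (M : Matrix (Fin n) (Fin n) R) (i : Fin (n + 1)) :
    stab M i (Fin.last n) = (1 : Matrix (Fin (n + 1)) (Fin (n + 1)) R) i (Fin.last n) := by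
  induction i using Fin.lastCases with
  | last => rw [stab_apply_last_last, Matrix.one_apply_eq]
  | cast i =>
      rw [stab_apply_c_last, Matrix.one_apply_ne (Fin.castSucc_lt_last i).ne]

theorem stab_row (M : Matrix (Fin n) (Fin n) R) (j : Fin (n + 1)) :
    stab M (Fin.last n) j = (1 : Matrix (Fin (n + 1)) (Fin (n + 1)) R) (Fin.last n) j := by
  induction j using Fin.lastCases with
  | last => rw [stab_apply_last_last, Matrix.one_apply_eq]
  | cast j =>
      rw [stab_apply_last_c, Matrix.one_apply_ne (Fin.castSucc_lt_last j).ne']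

/-- The top-left `n × n` block of an `(n+1) × (n+1)` matrix. -/
def tl (M : Matrix (Fin (n + 1)) (Fin (n + 1)) R) : Matrix (Fin n) (Fin n) R :=
  M.submatrix Fin.castSucc Fin.castSucc

theorem inverse_stab_row {X : Matrix (Fin n) (Fin n) R} (h : IsUnit X) (j : Fin (n + 1)) :
    Ring.inverse (stab X) (Fin.last n) j
      = (1 : Matrix (Fin (n + 1)) (Fin (n + 1)) R) (Fin.last n) j := by
  have h1 : stab X * Ring.inverse (stab X) = 1 := Ring.mul_inverse_cancel _ (stab_isUnit h)
  have h2 := congrFun (congrFun h1 (Fin.last n)) j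
  rw [Matrix.mul_apply] at h2
  simp only [stab_row, Matrix.one_apply, ite_mul, one_mul, zero_mul] at h2
  rw [Finset.sum_ite_eq, if_pos (Finset.mem_univ _)] at h2
  rw [h2, Matrix.one_apply]

/-- If an invertible `(n+1) × (n+1)` matrix has last column equal to the last standard basis
vector, then its top-left `n × n` block is invertible. -/
theorem tl_isUnit {M : Matrix (Fin (n + 1)) (Fin (n + 1)) R} (hM : IsUnit M)
    (hcol : ∀ i, M i (Fin.last n) = (1 : Matrix (Fin (n + 1)) (Fin (n + 1)) R) i (Fin.last n)) :
    IsUnit (tl M) := by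
  obtain ⟨u, hu⟩ := hM
  set N : Matrix (Fin (n + 1)) (Fin (n + 1)) R := Units.val (u⁻¹) with hNdef
  have hNM : N * M = 1 := by rw [hNdef, ← hu]; exact u.inv_mul
  have hMN : M * N = 1 := by rw [hNdef, ← hu]; exact u.mul_inv
  have hq : ∀ i : Fin n, N i.castSucc (Fin.last n) = 0 := by
    intro i
    have h2 := congrFun (congrFun hNM i.castSucc) (Fin.last n)
    rw [Matrix.mul_apply] at h2
    simp only [hcol, Matrix.one_apply, mul_ite, mul_one, mul_zero] at h2
    rw [Finset.sum_ite_eq', if_pos (Finset.mem_univ _)] at h2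
    rw [h2, if_neg (Fin.castSucc_lt_last i).ne]
  have h1 : tl N * tl M = 1 := by
    ext i j
    have h := congrFun (congrFun hNM i.castSucc) j.castSucc
    rw [Matrix.mul_apply, Fin.sum_univ_castSucc, hq i, zero_mul, add_zero] at h
    rw [Matrix.mul_apply]
    simp only [tl, Matrix.submatrix_apply]
    rw [h]
    simp [Matrix.one_apply, Fin.castSucc_inj]
  have h2 : tl M * tl N = 1 := by
    ext i j
    have h := congrFun (congrFun hMN i.castSucc) j.castSucc
    rw [Matrix.mul_apply, Fin.sum_univ_castSucc, hcol i.castSucc,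
      Matrix.one_apply_ne (Fin.castSucc_lt_last i).ne, zero_mul, add_zero] at h
    rw [Matrix.mul_apply]
    simp only [tl, Matrix.submatrix_apply]
    rw [h]
    simp [Matrix.one_apply, Fin.castSucc_inj]
  exact isUnit_iff_exists.mpr ⟨tl N, h2, h1⟩

theorem tl_mul_stab (g : Matrix (Fin (n + 1)) (Fin (n + 1)) R) (A : Matrix (Fin n) (Fin n) R) :
    tl (g * stab A) = tl g * A := by
  ext i j
  simp only [tl, Matrix.submatrix_apply, Matrix.mul_apply]
  rw [Fin.sum_univ_castSucc]
  simp [stab_apply_cc, stab_apply_last_c]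

end MatrixAux

end AuxLemmas

theorem matrix_inverse_cont {D : Type*} [NormedRing D] [CompleteSpace D] {n : ℕ}
    {M : Matrix (Fin n) (Fin n) D} (h : IsUnit M) :
    ContinuousAt (Ring.inverse : Matrix (Fin n) (Fin n) D → _) M := by
  letI := Matrix.linftyOpNormedRing (n := Fin n) (α := D)
  haveI : CompleteSpace (Matrix (Fin n) (Fin n) D) :=
    inferInstanceAs (CompleteSpace (Fin n → Fin n → D))
  haveI : HasSummableGeomSeries (Matrix (Fin n) (Fin n) D) :=
    @instHasSummableGeomSeriesOfCompleteSpace _ _ this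
  obtain ⟨u, rfl⟩ := h
  exact NormedRing.inverse_continuousAt u

theorem key_pikInj {D : Type*} [CStarAlgebra D] {m : ℕ}
    (hT : GLtrans (m + 1) (ContinuousMap Circle D)) : pikInj 0 D m := by
  classical
  intro a b hab
  rw [genLoopZero_homotopic_iff] at hab ⊢
  set A : GLs m D := a.1 cubeZeroPt with hA
  set B : GLs m D := b.1 cubeZeroPt with hB
  have hab' : Joined (stabGL A) (stabGL B) := hab
  obtain ⟨c0⟩ := hab'
  -- the path of matrices
  set Mf : ℝ → Matrix (Fin (m + 1)) (Fin (m + 1)) D := fun t => (c0.extend t).1 with hMf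
  have hMcont : Continuous Mf := continuous_subtype_val.comp c0.continuous_extend
  have hMunit : ∀ t, IsUnit (Mf t) := fun t => (c0.extend t).2
  have hM0 : Mf 0 = stab A.1 := by
    simp only [hMf, Path.extend_zero, c0.source]; rfl
  have hM1 : Mf 1 = stab B.1 := by
    simp only [hMf, Path.extend_one, c0.target]; rfl
  set Nf : ℝ → Matrix (Fin (m + 1)) (Fin (m + 1)) D := fun t => Ring.inverse (Mf t) with hNf
  have hNcont : Continuous Nf := by
    rw [continuous_iff_continuousAt]
    exact fun t => (matrix_inverse_cont (hMunit t)).comp hMcont.continuousAt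
  have hNM : ∀ t, Nf t * Mf t = 1 := fun t => Ring.inverse_mul_cancel _ (hMunit t)
  -- the loop of (last column, last row of inverse)
  set F : ℝ → (Fin (m + 1) → D) × (Fin (m + 1) → D) :=
    fun t => (fun i => Mf t i (Fin.last m), fun i => Nf t (Fin.last m) i) with hFdef
  have hFcont : Continuous F := by
    refine Continuous.prodMk ?_ ?_ <;> refine continuous_pi fun i => ?_
    · exact ((continuous_apply (Fin.last m)).comp (continuous_apply i)).comp hMcont
    · exact ((continuous_apply i).comp (continuous_apply (Fin.last m))).comp hNcont
  have hFval : ∀ X : GLs m D,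
      ((fun i => stab X.1 i (Fin.last m), fun i => Ring.inverse (stab X.1) (Fin.last m) i)
        : (Fin (m + 1) → D) × (Fin (m + 1) → D))
      = (fun i => (1 : Matrix (Fin (m + 1)) (Fin (m + 1)) D) i (Fin.last m),
         fun i => (1 : Matrix (Fin (m + 1)) (Fin (m + 1)) D) (Fin.last m) i) := by
    intro X
    refine Prod.ext (funext fun i => ?_) (funext fun j => ?_)
    · exact stab_col X.1 i
    · exact inverse_stab_row X.2 j
  have hF01 : F 0 = F 1 := by
    simp only [hFdef, hNf, hM0, hM1]
    rw [hFval A, hFval B]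
  -- lift to the circle
  set Φ : AddCircle (1 : ℝ) → (Fin (m + 1) → D) × (Fin (m + 1) → D) :=
    AddCircle.liftIco 1 0 F with hΦdef
  have hΦcont : Continuous Φ := AddCircle.liftIco_zero_continuous hF01 hFcont.continuousOn
  set e1 : AddCircle (1 : ℝ) ≃ₜ Circle := AddCircle.homeomorphCircle one_ne_zero with he1
  set ζ : ℝ → Circle := fun t => e1 ↑t with hζ
  have hζcont : Continuous ζ := e1.continuous.comp (AddCircle.continuous_mk' (1:ℝ))
  have hcoe0 : ((0 : ℝ) : AddCircle (1 : ℝ)) = 0 := rfl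
  have hΦcoe : ∀ t ∈ Set.Icc (0 : ℝ) 1, Φ ↑t = F t := by
    intro t ht
    rcases eq_or_lt_of_le ht.2 with h1 | h1
    · rw [h1, show ((1 : ℝ) : AddCircle (1 : ℝ)) = ((0 : ℝ) : AddCircle (1 : ℝ)) from
        (by rw [hcoe0]; exact AddCircle.coe_period 1), hΦdef,
        AddCircle.liftIco_zero_coe_apply (by constructor <;> norm_num), hF01, ← h1]
    · exact AddCircle.liftIco_zero_coe_apply ⟨ht.1, h1⟩
  have hΦrep : ∀ x : AddCircle (1 : ℝ), ∃ t : ℝ, Φ x = F t := fun x => ⟨_, rfl⟩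
  -- the unimodular vectors over C(𝕋, D)
  set v : Fin (m + 1) → ContinuousMap Circle D := fun i =>
    ⟨fun z => (Φ (e1.symm z)).1 i,
      (continuous_apply i).comp (continuous_fst.comp (hΦcont.comp e1.symm.continuous))⟩ with hv
  set w : Fin (m + 1) → ContinuousMap Circle D := fun i =>
    ⟨fun z => (Φ (e1.symm z)).2 i,
      (continuous_apply i).comp (continuous_snd.comp (hΦcont.comp e1.symm.continuous))⟩ with hw
  have hvLg : v ∈ Lg (m + 1) (ContinuousMap Circle D) := by
    refine ⟨w, ?_⟩
    ext z
    obtain ⟨t, htz⟩ := hΦrep (e1.symm z)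
    have hsum : (∑ i, w i * v i) z = ∑ i, (Φ (e1.symm z)).2 i * (Φ (e1.symm z)).1 i := by
      simp [hv, hw, ContinuousMap.coe_sum, Finset.sum_apply]
    rw [hsum, htz]
    have h3 := congrFun (congrFun (hNM t) (Fin.last m)) (Fin.last m)
    rw [Matrix.mul_apply] at h3
    simpa [hFdef, Matrix.one_apply] using h3
  set eV : Fin (m + 1) → ContinuousMap Circle D :=
    fun i => if i = Fin.last m then 1 else 0 with heV
  have heLg : eV ∈ Lg (m + 1) (ContinuousMap Circle D) := by
    refine ⟨eV, ?_⟩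
    have h4 : ∀ i, eV i * eV i = if i = Fin.last m then 1 else 0 := by
      intro i; by_cases h : i = Fin.last m <;> simp [heV, h]
    rw [Finset.sum_congr rfl fun i _ => h4 i]
    simp
  obtain ⟨G, hGu, hGe⟩ := hT v hvLg eV heLg
  -- the evaluated matrices
  set g : Circle → Matrix (Fin (m + 1)) (Fin (m + 1)) D :=
    fun z => Matrix.of fun i j => G i j z with hg
  have hgcont : Continuous g := continuous_pi fun i => continuous_pi fun j => (G i j).continuous
  obtain ⟨U, hU⟩ := hGu
  have hGG' : G * Units.val U⁻¹ = 1 := by rw [← hU]; exact U.mul_inv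
  have hG'G : Units.val U⁻¹ * G = 1 := by rw [← hU]; exact U.inv_mul
  have honept : ∀ (z : Circle) (i j : Fin (m + 1)),
      (1 : Matrix (Fin (m + 1)) (Fin (m + 1)) (ContinuousMap Circle D)) i j z
        = (1 : Matrix (Fin (m + 1)) (Fin (m + 1)) D) i j := by
    intro z i j
    by_cases h : i = j <;> simp [Matrix.one_apply, h]
  have hmulpt : ∀ (P Q : Matrix (Fin (m + 1)) (Fin (m + 1)) (ContinuousMap Circle D))
      (z : Circle) (i j : Fin (m + 1)),
      (P * Q) i j z = ∑ k, P i k z * Q k j z := by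
    intro P Q z i j
    rw [Matrix.mul_apply]
    simp [ContinuousMap.coe_sum, Finset.sum_apply]
  have hgunit : ∀ z, IsUnit (g z) := by
    intro z
    refine isUnit_iff_exists.mpr ⟨Matrix.of fun i j => Units.val U⁻¹ i j z, ?_, ?_⟩
    · ext i j
      rw [Matrix.mul_apply]
      simp only [hg, Matrix.of_apply]
      rw [← hmulpt G (Units.val U⁻¹) z i j, hGG']
      exact honept z i j
    · ext i j
      rw [Matrix.mul_apply]
      simp only [hg, Matrix.of_apply]
      rw [← hmulpt (Units.val U⁻¹) G z i j, hG'G]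
      exact honept z i j
  -- the corrected path
  set c' : ℝ → Matrix (Fin (m + 1)) (Fin (m + 1)) D := fun t => g (ζ t) * Mf t with hc'
  have hc'cont : Continuous c' := (hgcont.comp hζcont).matrix_mul hMcont
  have hc'unit : ∀ t, IsUnit (c' t) := fun t => (hgunit (ζ t)).mul (hMunit t)
  have hvz : ∀ t ∈ Set.Icc (0 : ℝ) 1, ∀ k, v k (ζ t) = Mf t k (Fin.last m) := by
    intro t ht k
    simp only [hv, ContinuousMap.coe_mk, hζ]
    rw [e1.symm_apply_apply, hΦcoe t ht]
  have hcol : ∀ t ∈ Set.Icc (0 : ℝ) 1, ∀ i, c' t i (Fin.last m)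
      = (1 : Matrix (Fin (m + 1)) (Fin (m + 1)) D) i (Fin.last m) := by
    intro t ht i
    have hmv := congrArg (fun f : ContinuousMap Circle D => f (ζ t)) (congrFun hGe i)
    simp only [Matrix.mulVec, dotProduct] at hmv
    simp only [ContinuousMap.coe_sum, Finset.sum_apply, ContinuousMap.mul_apply] at hmv
    simp only [hc']
    calc (g (ζ t) * Mf t) i (Fin.last m)
        = ∑ k, G i k (ζ t) * v k (ζ t) := by
          rw [Matrix.mul_apply]
          refine Finset.sum_congr rfl fun k _ => ?_
          rw [hvz t ht k]
          simp [hg]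
      _ = eV i (ζ t) := hmv
      _ = (1 : Matrix (Fin (m + 1)) (Fin (m + 1)) D) i (Fin.last m) := by
          by_cases h : i = Fin.last m <;> simp [heV, h, Matrix.one_apply]
  have hζ10 : ζ 1 = ζ 0 := by
    simp only [hζ]
    congr 1
    rw [hcoe0]
    exact AddCircle.coe_period 1
  have hc'0 : tl (c' 0) = tl (g (ζ 0)) * A.1 := by
    simp only [hc', hM0]; exact tl_mul_stab _ _
  have hc'1 : tl (c' 1) = tl (g (ζ 0)) * B.1 := by
    simp only [hc', hM1, hζ10]; exact tl_mul_stab _ _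
  have h0mem : (0 : ℝ) ∈ Set.Icc (0 : ℝ) 1 := by norm_num
  have h1mem : (1 : ℝ) ∈ Set.Icc (0 : ℝ) 1 := by norm_num
  have hdu : ∀ t, t ∈ Set.Icc (0 : ℝ) 1 → IsUnit (tl (c' t)) :=
    fun t ht => tl_isUnit (hc'unit t) (hcol t ht)
  have hgu : IsUnit (tl (g (ζ 0))) := by
    have h5 := hdu 0 h0mem
    rw [hc'0] at h5
    obtain ⟨uA, huA⟩ := A.2
    have h6 : IsUnit (tl (g (ζ 0)) * A.1 * Units.val uA⁻¹) := h5.mul (uA⁻¹).isUnit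
    rwa [mul_assoc, ← huA, Units.mul_inv, mul_one] at h6
  have hJ : Joined (⟨tl (c' 0), hdu 0 h0mem⟩ : GLs m D) ⟨tl (c' 1), hdu 1 h1mem⟩ := by
    refine ⟨⟨⟨fun s => ⟨tl (c' s), hdu s s.2⟩, ?_⟩, ?_, ?_⟩⟩
    · exact Continuous.subtype_mk
        ((hc'cont.comp continuous_subtype_val).matrix_submatrix _ _) _
    · exact Subtype.ext rfl
    · exact Subtype.ext rfl
  set L : GLs m D → GLs m D :=
    fun X => ⟨Units.val hgu.unit⁻¹ * X.1, (hgu.unit⁻¹.isUnit).mul X.2⟩ with hL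
  have hLcont : Continuous L :=
    Continuous.subtype_mk (continuous_const.matrix_mul continuous_subtype_val) _
  obtain ⟨p⟩ := hJ
  have hend0 : L ⟨tl (c' 0), hdu 0 h0mem⟩ = A := by
    apply Subtype.ext
    simp only [hL]
    rw [hc'0, ← mul_assoc, IsUnit.val_inv_mul hgu, one_mul]
  have hend1 : L ⟨tl (c' 1), hdu 1 h1mem⟩ = B := by
    apply Subtype.ext
    simp only [hL]
    rw [hc'1, ← mul_assoc, IsUnit.val_inv_mul hgu, one_mul]
  have hAB : Joined (L ⟨tl (c' 0), hdu 0 h0mem⟩) (L ⟨tl (c' 1), hdu 1 h1mem⟩) := ⟨p.map hLcont⟩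
  rwa [hend0, hend1] at hAB


/-- **Theorem.** For every unital C*-algebra `D`, `inj_0(D) ≤ gsr(𝕋D)` where
`𝕋D = C(𝕋, D)`: if `m ≥ gsr(C(𝕋, D))` then `π_0(GL_{m-1}(D)) → π_0(GL_m(D))`
is injective. -/
theorem injRank_zero_le_gsr_circle {D : Type*} [CStarAlgebra D] :
    injRank 0 D ≤ gsr (ContinuousMap Circle D) ∧
      ∀ m : ℕ, gsr (ContinuousMap Circle D) ≤ (m + 1 : ℕ) → pikInj 0 D m := by
  have hmain : ∀ m : ℕ, gsr (ContinuousMap Circle D) ≤ (m + 1 : ℕ) → pikInj 0 D m := by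
    intro m hm
    have hlt : gsr (ContinuousMap Circle D) < ((m + 2 : ℕ) : ℕ∞) :=
      lt_of_le_of_lt hm (by exact_mod_cast Nat.lt_succ_self (m + 1))
    rw [gsr, sInf_lt_iff] at hlt
    obtain ⟨N, hN, hNlt⟩ := hlt
    obtain ⟨n, rfl, hn1, hnall⟩ := hN
    have hn : n ≤ m + 1 := Nat.lt_succ_iff.mp (by exact_mod_cast hNlt)
    exact key_pikInj (hnall (m + 1) hn)
  refine ⟨?_, hmain⟩
  unfold injRank gsr
  apply sInf_le_sInf
  rintro N ⟨n, rfl, hn1, hnall⟩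
  exact ⟨n, rfl, hn1, fun m hm => key_pikInj (hnall (m + 1) hm)⟩

end
end

section
/- Let X be a compact Hausdorff space with base point x0, let A be a unital C*-algebra and let m ≥ 1. If m ≥ csr(A), then the forgetful map F : [X, Lg_m(A)]_* → [X, Lg_m(A)], from based homotopy classes (base point e_m = (0,…,0,1) ∈ Lg_m(A)) to free homotopy classes, is surjective. -/
open scoped unitInterval

noncomputable section

/-- The base point `e_m = (0, …, 0, 1)` of `Lg_m(A)`. -/
def eVec (m : ℕ) (A : Type*) [Ring A] : Fin m → A :=
  fun i => if (i : ℕ) = m - 1 then 1 else 0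


lemma eVec_mem {A : Type*} [Ring A] (m : ℕ) (hm : 1 ≤ m) : eVec m A ∈ Lg m A := by
  refine ⟨eVec m A, ?_⟩
  have key : ∀ i : Fin m, eVec m A i * eVec m A i
      = if i = (⟨m - 1, by omega⟩ : Fin m) then 1 else 0 := by
    intro i
    simp only [eVec, Fin.ext_iff]
    by_cases h : (i : ℕ) = m - 1 <;> simp [h]
  rw [Finset.sum_congr rfl fun i _ => key i]
  simp

lemma isOpen_Lg {A : Type*} [NormedRing A] [CompleteSpace A] (m : ℕ) :
    IsOpen (Lg m A) := by
  rw [Metric.isOpen_iff]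
  rintro v ⟨w, hw⟩
  set C : ℝ := ∑ i, ‖w i‖ with hC
  have hC0 : 0 ≤ C := Finset.sum_nonneg fun i _ => norm_nonneg _
  refine ⟨1 / (C + 1), by positivity, fun v' hv' => ?_⟩
  rw [Metric.mem_ball] at hv'
  set r : A := ∑ i, w i * (v' i - v i) with hr
  have hrn : ‖r‖ < 1 := by
    calc ‖r‖ ≤ ∑ i, ‖w i * (v' i - v i)‖ := norm_sum_le _ _
      _ ≤ ∑ i, ‖w i‖ * (1 / (C + 1)) := by
          refine Finset.sum_le_sum fun i _ => ?_
          refine (norm_mul_le _ _).trans ?_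
          have h1 : ‖v' i - v i‖ ≤ dist v' v := by
            rw [dist_eq_norm]
            simpa using norm_le_pi_norm (v' - v) i
          exact mul_le_mul_of_nonneg_left (h1.trans hv'.le) (norm_nonneg _)
      _ = C * (1 / (C + 1)) := by rw [← Finset.sum_mul]
      _ < 1 := by
          rw [mul_one_div, div_lt_one (by positivity)]
          exact lt_add_one C
  have h' : ‖-r‖ < 1 := by rwa [norm_neg]
  set u : Aˣ := Units.oneSub (-r) h' with hu
  have huval : (u : A) = 1 + r := by simp [hu, Units.oneSub, sub_neg_eq_add]
  refine ⟨fun i => (↑u⁻¹ : A) * w i, ?_⟩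
  have hsum : ∑ i, w i * v' i = 1 + r := by
    have key : ∀ i : Fin m, w i * v' i = w i * v i + w i * (v' i - v i) := fun i => by rw [mul_sub]; abel
    rw [Finset.sum_congr rfl fun i _ => key i, Finset.sum_add_distrib, hw]
  calc ∑ i, (↑u⁻¹ : A) * w i * v' i = (↑u⁻¹ : A) * ∑ i, w i * v' i := by
        rw [Finset.mul_sum]
        exact Finset.sum_congr rfl fun i _ => mul_assoc _ _ _
    _ = (↑u⁻¹ : A) * (u : A) := by rw [hsum, huval]
    _ = 1 := u.inv_mul

/-- **Theorem.** If `m ≥ csr(A)` then the forgetful map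
`F : [X, Lg_m(A)]_* → [X, Lg_m(A)]` is surjective: every continuous `f : X → Lg_m(A)` is
freely homotopic to a map based at `e_m`. -/
theorem forgetful_map_surjective {X : Type*} [TopologicalSpace X] [CompactSpace X]
    [T2Space X] (x0 : X) {A : Type*} [CStarAlgebra A] (m : ℕ) (hm : 1 ≤ m)
    (hcsr : csr A ≤ (m : ℕ)) :
    ∀ f : ContinuousMap X ↥(Lg m A), ∃ g : ContinuousMap X ↥(Lg m A),
      (g x0 : Fin m → A) = eVec m A ∧ f.Homotopic g := by
  -- Step 1: Lg m A is connected
  have hconn : IsConnected (Lg m A) := by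
    have h1 : csr A < (m : ℕ∞) + 1 :=
      lt_of_le_of_lt hcsr (by exact_mod_cast Nat.lt_succ_self m)
    rw [csr, sInf_lt_iff] at h1
    obtain ⟨N, ⟨n, rfl, hn1, hconn⟩, hNlt⟩ := h1
    have hnm : n ≤ m := by
      have : (n : ℕ∞) < (m : ℕ) + 1 := hNlt
      exact_mod_cast Nat.lt_succ_iff.mp (by exact_mod_cast this)
    exact hconn m hnm
  have hopen : IsOpen (Lg m A) := isOpen_Lg m
  have hpc : IsPathConnected (Lg m A) := (hopen.isConnected_iff_isPathConnected).mp hconn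
  haveI : PathConnectedSpace ↥(Lg m A) := isPathConnected_iff_pathConnectedSpace.mp hpc
  intro f
  set e : ↥(Lg m A) := ⟨eVec m A, eVec_mem m hm⟩ with he
  set p0 : ↥(Lg m A) := f x0 with hp0
  -- Step 2: path from f x0 to e
  let γ : Path p0 e := (PathConnectedSpace.joined p0 e).somePath
  -- Step 3: uniform thickening of the path stays in Lg
  have hK : IsCompact (Set.range fun t : I => ((γ t : Fin m → A))) :=
    isCompact_range (continuous_subtype_val.comp γ.continuous)
  have hKsub : (Set.range fun t : I => ((γ t : Fin m → A))) ⊆ Lg m A := by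
    rintro _ ⟨t, rfl⟩; exact (γ t).2
  obtain ⟨ε, hε, hthick⟩ := hK.exists_thickening_subset_open hopen hKsub
  -- Step 4: Urysohn function
  set U : Set X := (fun x => ((f x : Fin m → A))) ⁻¹' Metric.ball (p0 : Fin m → A) ε with hU
  have hUopen : IsOpen U :=
    (Metric.isOpen_ball).preimage (continuous_subtype_val.comp f.continuous)
  have hx0U : x0 ∈ U := by
    simp [hU, Metric.mem_ball, hp0, hε]
  obtain ⟨φ, hφ0, hφ1, hφI⟩ := exists_continuous_zero_one_of_isClosed
    hUopen.isClosed_compl isClosed_singleton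
    (Set.disjoint_singleton_right.mpr (by simpa using hx0U))
  -- Step 5: the homotopy
  set sig : I × X → I := fun p => Set.projIcc 0 1 zero_le_one ((p.1 : ℝ) * φ p.2) with hsig
  have hsigcont : Continuous sig :=
    continuous_projIcc.comp
      ((continuous_subtype_val.comp continuous_fst).mul (φ.continuous.comp continuous_snd))
  set val : I × X → (Fin m → A) :=
    fun p => ((γ (sig p) : Fin m → A)) + ((f p.2 : Fin m → A)) - ((p0 : Fin m → A)) with hval
  have hvalcont : Continuous val := by
    apply Continuous.sub
    · exact ((continuous_subtype_val.comp γ.continuous).comp hsigcont).add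
        (continuous_subtype_val.comp (f.continuous.comp continuous_snd))
    · exact continuous_const
  have hsig0 : ∀ t x, φ x = 0 → sig (t, x) = 0 := by
    intro t x hx
    apply Subtype.ext
    simp [hsig, hx, Set.coe_projIcc]
  have hvalf : ∀ t x, φ x = 0 → val (t, x) = (f x : Fin m → A) := by
    intro t x hx
    simp only [hval, hsig0 t x hx, γ.source]
    abel
  have hmem : ∀ p : I × X, val p ∈ Lg m A := by
    rintro ⟨t, x⟩
    by_cases hx : x ∈ U
    · apply hthick
      apply Metric.ball_subset_thickening (Set.mem_range_self (sig (t, x))) ε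
      rw [Metric.mem_ball]
      have hd : dist (val (t, x)) ((γ (sig (t, x)) : Fin m → A))
          = dist ((f x : Fin m → A)) ((p0 : Fin m → A)) := by
        rw [dist_eq_norm, dist_eq_norm]
        congr 1
        simp only [hval]
        abel
      rw [hd]
      exact hx
    · rw [hvalf t x (hφ0 hx)]
      exact (f x).2
  set Hfun : ContinuousMap (I × X) ↥(Lg m A) :=
    ⟨fun p => ⟨val p, hmem p⟩, hvalcont.subtype_mk _⟩ with hHfun
  set g : ContinuousMap X ↥(Lg m A) :=
    ⟨fun x => Hfun (1, x), Hfun.continuous.comp (continuous_const.prodMk continuous_id)⟩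
    with hg
  have hφx0 : φ x0 = 1 := hφ1 rfl
  refine ⟨g, ?_, ?_⟩
  · -- g x0 = eVec
    have hsig1 : sig (1, x0) = 1 := by
      apply Subtype.ext
      simp [hsig, hφx0, Set.coe_projIcc]
    show val (1, x0) = eVec m A
    simp only [hval, hsig1, γ.target, hp0]
    abel
  · -- homotopy
    refine ⟨{ toContinuousMap := Hfun, map_zero_left := ?_, map_one_left := ?_ }⟩
    · intro x
      apply Subtype.ext
      show val (0, x) = (f x : Fin m → A)
      have hsig00 : sig (0, x) = 0 := by
        apply Subtype.ext
        simp [hsig, Set.coe_projIcc]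
      simp only [hval, hsig00, γ.source]
      abel
    · intro x
      rfl

end
end

section
/- Let γ : C → D be a surjective unital *-homomorphism of unital C*-algebras, and let n ≥ 2 be such that the map π_1(GL_{n-1}(D)) → π_1(GL_n(D)) of fundamental groups (base points the identity matrices) induced by the stabilization map θ_D : a ↦ diag(a,1) is surjective. If g : [0,1] → GL_n(D) is a continuous path with g(0) = g(1) = I_n, then there exists a continuous path h : [0,1] → GL_n(C) such that h(0) ∈ θ_C(GL_{n-1}(C)), h(1) = I_n, and γ(h(t)) = g(t) for all t ∈ [0,1]. -/
open scoped unitInterval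

noncomputable section

/-- Applying a ring homomorphism entrywise to an invertible matrix. -/
def mapGLs {n : ℕ} {R S : Type*} [Ring R] [Ring S] (f : R →+* S) (M : GLs n R) : GLs n S :=
  ⟨M.1.map f, M.2.map f.mapMatrix⟩



theorem approx_lift {E F X : Type*} [NormedAddCommGroup E] [NormedSpace ℂ E]
    [NormedAddCommGroup F] [NormedSpace ℂ F]
    [MetricSpace X] [CompactSpace X]
    (T : E →L[ℂ] F) {K : ℝ} (hK : 0 ≤ K)
    (hKl : ∀ y : F, ∃ x, T x = y ∧ ‖x‖ ≤ K * ‖y‖)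
    (f : C(X, F)) {ε : ℝ} (hε : 0 < ε) :
    ∃ g : C(X, E), (∀ x, ‖g x‖ ≤ K * ‖f‖) ∧ ∀ x, ‖T (g x) - f x‖ ≤ ε := by
  rcases isEmpty_or_nonempty X with hX | hX
  · exact ⟨0, fun x => (IsEmpty.elim hX x), fun x => (IsEmpty.elim hX x)⟩
  obtain ⟨δ, hδ, hfδ⟩ := Metric.uniformContinuous_iff.mp
    (CompactSpace.uniformContinuous_of_continuous f.continuous) ε hε
  obtain ⟨s, hs⟩ := isCompact_univ.elim_finite_subcover (fun x : X => Metric.ball x δ)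
    (fun x => Metric.isOpen_ball) (fun x _ => Set.mem_iUnion.mpr ⟨x, Metric.mem_ball_self hδ⟩)
  set ψ : X → X → ℝ := fun i x => max (δ - dist x i) 0 with hψ
  have hψcont : ∀ i, Continuous (ψ i) := fun i =>
    ((continuous_const.sub (continuous_id.dist continuous_const)).max continuous_const)
  have hψnn : ∀ i x, 0 ≤ ψ i x := fun i x => le_max_right _ _
  have hψball : ∀ i x, ψ i x ≠ 0 → dist x i < δ := by
    intro i x h
    by_contra hd
    push_neg at hd
    have : δ - dist x i ≤ 0 := by linarith
    simp only [hψ] at h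
    rw [max_eq_right this] at h
    exact h rfl
  set Sf : X → ℝ := fun x => ∑ i ∈ s, ψ i x with hSf
  have hScont : Continuous Sf := continuous_finset_sum _ (fun i _ => (hψcont i))
  have hSpos : ∀ x, 0 < Sf x := by
    intro x
    have hx := hs (Set.mem_univ x)
    rw [Set.mem_iUnion₂] at hx
    obtain ⟨i, hi, hxi⟩ := hx
    have hdi : dist x i < δ := Metric.mem_ball.mp hxi
    refine Finset.sum_pos' (fun j _ => hψnn j x) ⟨i, hi, ?_⟩
    have : 0 < δ - dist x i := by linarith
    simp only [hψ]
    exact lt_max_of_lt_left this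
  choose c hc hcn using hKl
  set g0 : X → E := fun x => (Sf x)⁻¹ • ∑ i ∈ s, ψ i x • c (f i) with hg0
  have hg0cont : Continuous g0 :=
    ((hScont.inv₀ (fun x => (hSpos x).ne')).smul
      (continuous_finset_sum _ fun i _ => ((hψcont i).smul continuous_const)))
  have hsum_bound : ∀ (x : X) (v : X → F) (hv : ∀ i, ψ i x ≠ 0 → ‖v i‖ ≤ ε),
      True := fun _ _ _ => trivial
  refine ⟨⟨g0, hg0cont⟩, ?_, ?_⟩
  · intro x
    have h1 : ‖∑ i ∈ s, ψ i x • c (f i)‖ ≤ ∑ i ∈ s, ψ i x * (K * ‖f‖) := by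
      refine (norm_sum_le _ _).trans (Finset.sum_le_sum fun i _ => ?_)
      rw [norm_smul, Real.norm_eq_abs, abs_of_nonneg (hψnn i x)]
      exact mul_le_mul_of_nonneg_left ((hcn (f i)).trans
        (mul_le_mul_of_nonneg_left (f.norm_coe_le_norm i) hK)) (hψnn i x)
    have h2 : ‖g0 x‖ ≤ (Sf x)⁻¹ * (Sf x * (K * ‖f‖)) := by
      rw [hg0]
      simp only
      rw [norm_smul, Real.norm_eq_abs, abs_of_nonneg (inv_nonneg.mpr (hSpos x).le)]
      refine mul_le_mul_of_nonneg_left (h1.trans ?_) (inv_nonneg.mpr (hSpos x).le)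
      rw [hSf, Finset.sum_mul]
    calc ‖(⟨g0, hg0cont⟩ : C(X, E)) x‖ = ‖g0 x‖ := rfl
      _ ≤ (Sf x)⁻¹ * (Sf x * (K * ‖f‖)) := h2
      _ = K * ‖f‖ := inv_mul_cancel_left₀ (hSpos x).ne' _
  · intro x
    have hTg : T (g0 x) = (Sf x)⁻¹ • ∑ i ∈ s, ψ i x • f i := by
      rw [hg0]
      simp only
      rw [T.map_smul_of_tower, map_sum]
      congr 1
      refine Finset.sum_congr rfl fun i _ => ?_
      rw [T.map_smul_of_tower, hc]
    have hfx : f x = (Sf x)⁻¹ • ∑ i ∈ s, ψ i x • f x := by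
      rw [← Finset.sum_smul]
      show f x = (Sf x)⁻¹ • Sf x • f x
      rw [smul_smul, inv_mul_cancel₀ (hSpos x).ne', one_smul]
    have hdiff : T (g0 x) - f x = (Sf x)⁻¹ • ∑ i ∈ s, ψ i x • (f i - f x) := by
      rw [hTg]
      conv_lhs => rw [hfx]
      rw [← smul_sub, ← Finset.sum_sub_distrib]
      congr 1
      refine Finset.sum_congr rfl fun i _ => ?_
      rw [smul_sub]
    have h3 : ‖∑ i ∈ s, ψ i x • (f i - f x)‖ ≤ ∑ i ∈ s, ψ i x * ε := by
      refine (norm_sum_le _ _).trans (Finset.sum_le_sum fun i _ => ?_)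
      rw [norm_smul, Real.norm_eq_abs, abs_of_nonneg (hψnn i x)]
      rcases eq_or_ne (ψ i x) 0 with h0 | h0
      · rw [h0]; simp
      · refine mul_le_mul_of_nonneg_left ?_ (hψnn i x)
        rw [← dist_eq_norm, dist_comm]
        exact (hfδ (hψball i x h0)).le
    calc ‖T ((⟨g0, hg0cont⟩ : C(X, E)) x) - f x‖ = ‖T (g0 x) - f x‖ := rfl
      _ = ‖(Sf x)⁻¹ • ∑ i ∈ s, ψ i x • (f i - f x)‖ := by rw [hdiff]
      _ ≤ (Sf x)⁻¹ * (Sf x * ε) := by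
          rw [norm_smul, Real.norm_eq_abs, abs_of_nonneg (inv_nonneg.mpr (hSpos x).le)]
          refine mul_le_mul_of_nonneg_left (h3.trans ?_) (inv_nonneg.mpr (hSpos x).le)
          rw [hSf, Finset.sum_mul]
      _ = ε := inv_mul_cancel_left₀ (hSpos x).ne' _

theorem exact_lift {E F X : Type*} [NormedAddCommGroup E] [NormedSpace ℂ E] [CompleteSpace E]
    [NormedAddCommGroup F] [NormedSpace ℂ F]
    [MetricSpace X] [CompactSpace X]
    (T : E →L[ℂ] F) {K : ℝ} (hK : 0 ≤ K)
    (hKl : ∀ y : F, ∃ x, T x = y ∧ ‖x‖ ≤ K * ‖y‖)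
    (f : C(X, F)) :
    ∃ g : C(X, E), (∀ x, T (g x) = f x) ∧ ∀ x, ‖g x‖ ≤ 2 * K * ‖f‖ := by
  have step : ∀ φ : C(X, F), ∃ g : C(X, E),
      (∀ x, ‖g x‖ ≤ K * ‖φ‖) ∧ ∀ x, ‖T (g x) - φ x‖ ≤ ‖φ‖ / 2 := by
    intro φ
    rcases eq_or_lt_of_le (norm_nonneg φ) with h0 | h0
    · refine ⟨0, fun x => ?_, fun x => ?_⟩
      · simp [← h0]
      · have hφx : φ x = 0 := by
          have := φ.norm_coe_le_norm x
          rw [← h0] at this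
          simpa using norm_le_zero_iff.mp this
        simp [hφx, ← h0]
    · exact approx_lift T hK hKl φ (by positivity)
  choose L hL1 hL2 using step
  set Tc : C(X, E) → C(X, F) := fun g => ⟨fun x => T (g x), T.continuous.comp g.continuous⟩
    with hTc
  set u : ℕ → C(X, F) := fun k => Nat.rec f (fun _ φ => φ - Tc (L φ)) k with hu
  have hu0 : u 0 = f := rfl
  have huS : ∀ k, u (k + 1) = u k - Tc (L (u k)) := fun k => rfl
  have hnorm : ∀ k, ‖u k‖ ≤ ‖f‖ * (2⁻¹ : ℝ) ^ k := by
    intro k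
    induction k with
    | zero => simp [hu0]
    | succ k ih =>
      have h1 : ‖u (k + 1)‖ ≤ ‖u k‖ / 2 := by
        rw [huS k]
        refine ContinuousMap.norm_le _ (by positivity) |>.mpr fun x => ?_
        have := hL2 (u k) x
        calc ‖(u k - Tc (L (u k))) x‖ = ‖T (L (u k) x) - u k x‖ := by
              simp [hTc, norm_sub_rev]
          _ ≤ ‖u k‖ / 2 := this
      calc ‖u (k + 1)‖ ≤ ‖u k‖ / 2 := h1
        _ ≤ ‖f‖ * (2⁻¹ : ℝ) ^ k / 2 := by linarith
        _ = ‖f‖ * (2⁻¹ : ℝ) ^ (k + 1) := by ring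
  set w : ℕ → ℝ := fun k => K * ‖f‖ * (2⁻¹ : ℝ) ^ k with hw
  have hwsum : Summable w := (summable_geometric_of_lt_one (by norm_num) (by norm_num)).mul_left _
  have hbd : ∀ k x, ‖L (u k) x‖ ≤ w k := by
    intro k x
    calc ‖L (u k) x‖ ≤ K * ‖u k‖ := hL1 (u k) x
      _ ≤ K * (‖f‖ * (2⁻¹ : ℝ) ^ k) := by
          exact mul_le_mul_of_nonneg_left (hnorm k) hK
      _ = w k := by rw [hw]; ring
  have hgsummable : ∀ x, Summable fun k => L (u k) x :=
    fun x => Summable.of_norm_bounded hwsum (fun k => hbd k x)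
  have hgcont : Continuous fun x => ∑' k, L (u k) x :=
    continuous_tsum (fun k => (L (u k)).continuous) hwsum (fun k x => hbd k x)
  have hulim : ∀ x, Filter.Tendsto (fun n => u n x) Filter.atTop (nhds 0) := by
    intro x
    refine squeeze_zero_norm (fun n => (u n).norm_coe_le_norm x |>.trans (hnorm n)) ?_
    have : Filter.Tendsto (fun n : ℕ => ‖f‖ * (2⁻¹ : ℝ) ^ n) Filter.atTop (nhds (‖f‖ * 0)) :=
      (tendsto_pow_atTop_nhds_zero_of_lt_one (by norm_num) (by norm_num)).const_mul _
    simpa using this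
  refine ⟨⟨fun x => ∑' k, L (u k) x, hgcont⟩, fun x => ?_, fun x => ?_⟩
  · have h1 : T (∑' k, L (u k) x) = ∑' k, T (L (u k) x) := T.map_tsum (hgsummable x)
    have h2 : ∀ k, T (L (u k) x) = u k x - u (k + 1) x := by
      intro k
      rw [huS k]
      simp [hTc]
    have h3 : HasSum (fun k => T (L (u k) x)) (f x) := by
      have hs : Summable fun k => T (L (u k) x) :=
        ((hgsummable x).map (T : E →+ F) T.continuous)
      rw [hs.hasSum_iff_tendsto_nat]
      have : ∀ n, ∑ i ∈ Finset.range n, T (L (u i) x) = f x - u n x := by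
        intro n
        rw [Finset.sum_congr rfl fun i _ => h2 i]
        rw [Finset.sum_range_sub' (fun k => u k x) n]
        rw [hu0]
      simp only [this]
      simpa using tendsto_const_nhds.sub (hulim x)
    rw [ContinuousMap.coe_mk, h1, h3.tsum_eq]
  · calc ‖∑' k, L (u k) x‖ ≤ ∑' k, w k := by
          refine tsum_of_norm_bounded ?_ (fun k => hbd k x)
          exact hwsum.hasSum
      _ = K * ‖f‖ * 2 := by
          rw [hw]
          rw [tsum_mul_left, tsum_geometric_inv_two]
      _ ≤ 2 * K * ‖f‖ := by ring_nf; exact le_rfl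

theorem isUnit_list_prod' {M : Type*} [Monoid M] {l : List ℕ} (f : ℕ → M)
    (h : ∀ m ∈ l, IsUnit (f m)) : IsUnit (l.map f).prod := by
  induction l with
  | nil => simp
  | cons a l ih =>
      simp only [List.map_cons, List.prod_cons]
      exact (h a (by simp)).mul (ih fun m hm => h m (by simp [hm]))

section SquareLift

attribute [local instance] Matrix.linftyOpNormedRing Matrix.linftyOpNormedAlgebra

variable {C D : Type*} [CStarAlgebra C] [CStarAlgebra D] {n : ℕ}

local notation "MC" => Matrix (Fin n) (Fin n) C
local notation "MD" => Matrix (Fin n) (Fin n) D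

instance sqlComplC : @CompleteSpace MC PseudoMetricSpace.toUniformSpace :=
  inferInstanceAs (CompleteSpace (Fin n → Fin n → C))

instance sqlGeomC : HasSummableGeomSeries MC := inferInstance

instance sqlComplD : @CompleteSpace MD PseudoMetricSpace.toUniformSpace :=
  inferInstanceAs (CompleteSpace (Fin n → Fin n → D))

instance sqlGeomD : HasSummableGeomSeries MD := inferInstance

set_option maxHeartbeats 2000000 in
theorem square_lift (T : MC →L[ℂ] MD)
    (hTmul : ∀ a b : MC, T (a * b) = T a * T b) (hTone : T 1 = 1)
    {K : ℝ} (hK : 0 ≤ K) (hKl : ∀ y : MD, ∃ x, T x = y ∧ ‖x‖ ≤ K * ‖y‖)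
    (F : C(I × I, MD)) (hF : ∀ p, IsUnit (F p))
    (e : C(I, MC)) (he : ∀ x : I, IsUnit (e x)) (heF : ∀ x : I, T (e x) = F (x, 1)) :
    ∃ H : C(I × I, MC), (∀ p, IsUnit (H p)) ∧ (∀ p, T (H p) = F p) ∧ ∀ x : I, H (x, 1) = e x := by
  classical
  set pj : ℝ → I := Set.projIcc 0 1 zero_le_one with hpj
  have hpjcont : Continuous pj := continuous_projIcc
  set G : ℝ × ℝ → MD := fun p => F (pj p.1, pj p.2) with hG
  have hGcont : Continuous G := F.continuous.comp (hpjcont.prodMap hpjcont)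
  have hGunit : ∀ p, IsUnit (G p) := fun p => hF _
  have hGmem : ∀ p, G p ∈ F '' Set.univ := fun p => ⟨(pj p.1, pj p.2), Set.mem_univ _, rfl⟩
  have hGuc : UniformContinuous G := by
    have h1 : UniformContinuous (fun p : ℝ × ℝ => (pj p.1, pj p.2)) :=
      ((LipschitzWith.projIcc zero_le_one).uniformContinuous.comp uniformContinuous_fst).prodMk
        ((LipschitzWith.projIcc zero_le_one).uniformContinuous.comp uniformContinuous_snd)
    exact (CompactSpace.uniformContinuous_of_continuous F.continuous).comp h1
  set Fi : ℝ × ℝ → MD := fun p => Ring.inverse (G p) with hFi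
  have hFicont : Continuous Fi := by
    rw [continuous_iff_continuousAt]
    intro p
    have h1 : ContinuousAt Ring.inverse (G p) := by
      have := NormedRing.inverse_continuousAt (hGunit p).unit
      rwa [(hGunit p).unit_spec] at this
    exact h1.comp hGcont.continuousAt
  obtain ⟨Mi0, hMi0⟩ : ∃ Mi0, ∀ y ∈ Ring.inverse '' (F '' Set.univ), ‖y‖ ≤ Mi0 := by
    have hcpt : IsCompact (F '' Set.univ) := isCompact_univ.image F.continuous
    have hcont : ContinuousOn Ring.inverse (F '' Set.univ) := by
      intro y hy
      obtain ⟨q, -, rfl⟩ := hy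
      have h2 := NormedRing.inverse_continuousAt (hF q).unit
      rw [(hF q).unit_spec] at h2
      exact h2.continuousWithinAt
    exact (hcpt.image_of_continuousOn hcont).isBounded.exists_norm_le
  set Mi : ℝ := max Mi0 0 with hMi
  have hMinn : 0 ≤ Mi := le_max_right _ _
  have hFib : ∀ p, ‖Fi p‖ ≤ Mi :=
    fun p => le_max_of_le_left (hMi0 _ ⟨G p, hGmem p, rfl⟩)
  set ε₀ : ℝ := 1 / (4 * (K + 1) * (Mi + 1)) with hε₀
  have hε₀pos : 0 < ε₀ := by positivity
  obtain ⟨δ, hδpos, hδ⟩ := Metric.uniformContinuous_iff.mp hGuc ε₀ hε₀pos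
  obtain ⟨N', hN'⟩ := exists_nat_one_div_lt hδpos
  set N : ℕ := N' + 1 with hN
  have hNpos : (0 : ℝ) < N := by positivity
  have hNδ : 1 / (N : ℝ) < δ := by
    rw [hN]; push_cast; exact hN'
  set med : ℕ → ℝ → ℝ := fun k t => min (max t ((k : ℝ) / N)) (((k : ℝ) + 1) / N) with hmed
  set Q : ℕ → ℝ × ℝ → MD :=
    fun k p => G (p.1, med k p.2) * Fi (p.1, ((k : ℝ) + 1) / N) with hQ
  have hmedlb : ∀ (k : ℕ) (t : ℝ), (k : ℝ) / N ≤ med k t := by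
    intro k t
    refine le_min (le_max_right _ _) ?_
    gcongr
    linarith
  have hmedub : ∀ k t, med k t ≤ ((k : ℝ) + 1) / N := fun k t => min_le_right _ _
  have hQunit : ∀ k p, IsUnit (Q k p) := by
    intro k p
    exact (hGunit _).mul (isUnit_ringInverse.mpr (hGunit _))
  have hmedcont : ∀ k, Continuous (med k) :=
    fun k => ((continuous_id.max continuous_const).min continuous_const)
  have hQcont : ∀ k, Continuous (Q k) := by
    intro k
    exact (hGcont.comp (continuous_fst.prodMk ((hmedcont k).comp continuous_snd))).mul
      (hFicont.comp (continuous_fst.prodMk continuous_const))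
  have hQsmall : ∀ k p, ‖Q k p - 1‖ ≤ ε₀ * Mi := by
    intro k p
    have h1 : (1 : MD) = G (p.1, ((k : ℝ) + 1) / N) * Fi (p.1, ((k : ℝ) + 1) / N) :=
      (Ring.mul_inverse_cancel _ (hGunit _)).symm
    have h2 : Q k p - 1
        = (G (p.1, med k p.2) - G (p.1, ((k : ℝ) + 1) / N)) * Fi (p.1, ((k : ℝ) + 1) / N) := by
      rw [hQ]
      simp only
      rw [sub_mul, ← h1]
    rw [h2]
    refine (norm_mul_le _ _).trans ?_
    have h3 : ‖G (p.1, med k p.2) - G (p.1, ((k : ℝ) + 1) / N)‖ ≤ ε₀ := by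
      have hdm : dist (med k p.2) (((k : ℝ) + 1) / N) ≤ 1 / N := by
        rw [Real.dist_eq, abs_le]
        have he1 : ((k : ℝ) + 1) / N - 1 / N = (k : ℝ) / N := by ring
        constructor
        · have := hmedlb k p.2
          linarith
        · have := hmedub k p.2
          have h1N : (0:ℝ) ≤ 1 / N := by positivity
          linarith
      have hd : dist ((p.1, med k p.2) : ℝ × ℝ) (p.1, ((k : ℝ) + 1) / N) < δ := by
        rw [Prod.dist_eq]
        simp only [dist_self]
        exact max_lt hδpos (lt_of_le_of_lt hdm hNδ)
      have := hδ hd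
      rw [dist_eq_norm] at this
      exact this.le
    exact mul_le_mul h3 (hFib _) (norm_nonneg _) hε₀pos.le
  -- lifts of Q - 1
  have hQIC : ∀ k, Continuous fun p : I × I => Q k ((p.1 : ℝ), (p.2 : ℝ)) - 1 := by
    intro k
    exact ((hQcont k).comp ((continuous_subtype_val.comp continuous_fst).prodMk
      (continuous_subtype_val.comp continuous_snd))).sub continuous_const
  have hckex : ∀ k : ℕ, ∃ c : C(I × I, MC),
      (∀ p : I × I, T (c p) = Q k ((p.1 : ℝ), (p.2 : ℝ)) - 1) ∧
      ∀ p : I × I, ‖c p‖ ≤ 2 * K * (ε₀ * Mi) := by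
    intro k
    obtain ⟨c, hc1, hc2⟩ := exact_lift T hK hKl ⟨fun p : I × I => Q k ((p.1 : ℝ), (p.2 : ℝ)) - 1, hQIC k⟩
    refine ⟨c, hc1, fun p => (hc2 p).trans ?_⟩
    have hq : ‖(⟨fun p : I × I => Q k ((p.1 : ℝ), (p.2 : ℝ)) - 1, hQIC k⟩ : @ContinuousMap (I × I) MD _
          PseudoMetricSpace.toUniformSpace.toTopologicalSpace)‖
        ≤ ε₀ * Mi :=
      (ContinuousMap.norm_le _ (by positivity)).mpr fun p => hQsmall k _
    have hnn : (0:ℝ) ≤ ‖(⟨fun p : I × I => Q k ((p.1 : ℝ), (p.2 : ℝ)) - 1, hQIC k⟩ : @ContinuousMap (I × I) MD _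
          PseudoMetricSpace.toUniformSpace.toTopologicalSpace)‖ :=
      norm_nonneg _
    nlinarith
  choose ck hck1 hck2 using hckex
  set R : ℕ → I × I → MC := fun k p => 1 + (ck k p - ck k (p.1, 1)) with hR
  have hRcont : ∀ k, Continuous (R k) := fun k =>
    continuous_const.add ((ck k).continuous.sub ((ck k).continuous.comp
      ((continuous_fst).prodMk continuous_const)))
  have hcksmall : ∀ k (p : I × I), ‖ck k p - ck k (p.1, 1)‖ < 1 := by
    intro k p
    have h1 := hck2 k p
    have h2 := hck2 k (p.1, 1)
    have h3 : ‖ck k p - ck k (p.1, 1)‖ ≤ 2 * K * (ε₀ * Mi) + 2 * K * (ε₀ * Mi) :=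
      (norm_sub_le _ _).trans (by linarith)
    have hP : (0:ℝ) < 4 * (K + 1) * (Mi + 1) := by positivity
    have heq : 2 * K * (ε₀ * Mi) + 2 * K * (ε₀ * Mi)
        = (4 * K * Mi) / (4 * (K + 1) * (Mi + 1)) := by
      rw [hε₀]; field_simp; ring
    have hlt : (4 * K * Mi) / (4 * (K + 1) * (Mi + 1)) < 1 := by
      rw [div_lt_one hP]; nlinarith
    linarith
  have hRunit : ∀ k (p : I × I), IsUnit (R k p) := by
    intro k p
    have h := hcksmall k p
    have h2 : IsUnit ((1 : MC) - -(ck k p - ck k (p.1, 1))) :=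
      ⟨Units.oneSub (-(ck k p - ck k (p.1, 1))) (by rwa [norm_neg]), rfl⟩
    rw [sub_neg_eq_add] at h2
    exact h2
  have hR1 : ∀ k (x : I), R k (x, 1) = 1 := by
    intro k x
    rw [hR]
    simp
  have hTR : ∀ k, k < N → ∀ p : I × I, T (R k p) = Q k ((p.1 : ℝ), (p.2 : ℝ)) := by
    intro k hkN p
    have hQk1 : Q k ((p.1 : ℝ), ((1 : I) : ℝ)) = 1 := by
      have hk1 : (k : ℝ) / N ≤ 1 := by
        rw [div_le_one hNpos]
        exact_mod_cast (Nat.le_of_lt hkN)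
      have hk2 : ((k : ℝ) + 1) / N ≤ 1 := by
        rw [div_le_one hNpos]
        exact_mod_cast hkN
      have h1 : med k ((1 : I) : ℝ) = ((k : ℝ) + 1) / N := by
        rw [hmed]
        simp only [Set.Icc.coe_one]
        rw [max_eq_left hk1, min_eq_right hk2]
      rw [hQ]
      simp only
      rw [h1]
      exact Ring.mul_inverse_cancel _ (hGunit _)
    have h2 : T (R k p) = 1 + ((Q k ((p.1 : ℝ), (p.2 : ℝ)) - 1)
        - (Q k ((p.1 : ℝ), ((1:I) : ℝ)) - 1)) := by
      rw [hR]
      simp only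
      rw [map_add, map_sub, hTone, hck1, hck1]
    rw [h2, hQk1]
    abel
  -- telescoping identity
  have tele : ∀ l : ℕ, l ≤ N → ∀ x t : ℝ,
      ((List.range' (N - l) l).map (fun k => Q k (x, t))).prod
        = G (x, max t (((N - l : ℕ) : ℝ) / N)) * Fi (x, 1) := by
    intro l
    induction l with
    | zero =>
        intro hl x t
        have h1 : ((N - 0 : ℕ) : ℝ) / N = 1 := by
          rw [Nat.sub_zero]
          exact div_self hNpos.ne'
        have h2 : G (x, max t 1) = G (x, 1) := by
          rw [hG]
          simp only
          congr 2
          rw [hpj, Set.projIcc_of_right_le zero_le_one (le_max_right t 1),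
              Set.projIcc_of_right_le zero_le_one le_rfl]
        simp only [List.range'_zero, List.map_nil, List.prod_nil]
        rw [h1, h2, hFi]
        exact (Ring.mul_inverse_cancel _ (hGunit _)).symm
    | succ l ih =>
        intro hl x t
        have hjl : N - (l + 1) + 1 = N - l := by omega
        set j : ℕ := N - (l + 1) with hj
        have hNl : N - l = j + 1 := by omega
        have hcast : ((N - l : ℕ) : ℝ) = (j : ℝ) + 1 := by
          rw [hNl]; push_cast; ring
        have hjled : (j : ℝ) / N ≤ ((j : ℝ) + 1) / N := by
          gcongr
          linarith
        rw [List.range'_succ]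
        simp only [List.map_cons, List.prod_cons]
        rw [hjl, ih (by omega) x t, hcast]
        have hbc1 : Fi (x, ((j : ℝ) + 1) / N) * G (x, ((j : ℝ) + 1) / N) = 1 :=
          Ring.inverse_mul_cancel _ (hGunit _)
        have hbc2 : G (x, ((j : ℝ) + 1) / N) * Fi (x, ((j : ℝ) + 1) / N) = 1 :=
          Ring.mul_inverse_cancel _ (hGunit _)
        rcases le_total t (((j : ℝ) + 1) / N) with hc | hc
        · have hmax : max t (((j : ℝ) + 1) / N) = ((j : ℝ) + 1) / N := max_eq_right hc
          have hmed' : med j t = max t ((j : ℝ) / N) := by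
            rw [hmed]
            exact min_eq_left (max_le hc hjled)
          rw [hQ]
          simp only
          rw [hmed', hmax, mul_assoc, ← mul_assoc (Fi (x, ((j : ℝ) + 1) / N)), hbc1, one_mul]
        · have hmax : max t (((j : ℝ) + 1) / N) = t := max_eq_left hc
          have hmed' : med j t = ((j : ℝ) + 1) / N := by
            rw [hmed]
            exact min_eq_right (le_max_of_le_left hc)
          have hmax2 : max t ((j : ℝ) / N) = t := max_eq_left (hjled.trans hc)
          rw [hQ]
          simp only
          rw [hmed', hmax, hmax2, ← mul_assoc, hbc2, one_mul]
  -- the lift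
  set Hf : I × I → MC := fun p => ((List.range N).map (fun k => R k p)).prod * e p.1 with hHf
  have hHcont : Continuous Hf := by
    refine Continuous.mul ?_ (e.continuous.comp continuous_fst)
    exact continuous_list_prod _ (fun k _ => hRcont k)
  have hHunit : ∀ p, IsUnit (Hf p) := fun p =>
    (isUnit_list_prod' _ (fun k _ => hRunit k p)).mul (he p.1)
  have hTlist : ∀ (l : List ℕ) (p : I × I), (∀ k ∈ l, k < N) →
      T ((l.map (fun k => R k p)).prod) = (l.map (fun k => Q k ((p.1 : ℝ), (p.2 : ℝ)))).prod := by
    intro l p hl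
    induction l with
    | nil => simpa using hTone
    | cons a l ih =>
        simp only [List.map_cons, List.prod_cons]
        rw [hTmul, hTR a (hl a (by simp)) p, ih (fun k hk => hl k (by simp [hk]))]
  have hTH : ∀ p : I × I, T (Hf p) = F p := by
    intro p
    rw [hHf]
    simp only
    rw [hTmul, hTlist (List.range N) p (fun k hk => List.mem_range.mp hk), heF]
    have h1 := tele N le_rfl (p.1 : ℝ) (p.2 : ℝ)
    rw [Nat.sub_self] at h1
    rw [List.range_eq_range', h1]
    have hmax : max ((p.2 : ℝ)) (((0:ℕ) : ℝ) / N) = (p.2 : ℝ) := by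
      rw [Nat.cast_zero, zero_div]
      exact max_eq_left p.2.2.1
    have hpj1 : pj (1 : ℝ) = 1 := by
      rw [hpj, Set.projIcc_right]
      rfl
    have hG2 : G ((p.1 : ℝ), (p.2 : ℝ)) = F p := by
      rw [hG]
      simp only
      rw [hpj, Set.projIcc_val, Set.projIcc_val]
    have hG1 : G ((p.1 : ℝ), 1) = F (p.1, 1) := by
      rw [hG]
      simp only
      rw [hpj1]
      rw [hpj, Set.projIcc_val]
    have hFi1 : Fi ((p.1 : ℝ), 1) = Ring.inverse (F (p.1, 1)) := by
      rw [hFi]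
      simp only
      rw [hG1]
    rw [hmax, hG2, hFi1, mul_assoc, Ring.inverse_mul_cancel _ (hF _), mul_one]
  refine ⟨⟨Hf, hHcont⟩, hHunit, hTH, fun x => ?_⟩
  show Hf (x, 1) = e x
  rw [hHf]
  simp only
  have hone : ((List.range N).map (fun k => R k (x, 1))).prod = 1 := by
    refine List.prod_eq_one ?_
    intro m hm
    simp only [List.mem_map] at hm
    obtain ⟨k, -, rfl⟩ := hm
    exact hR1 k x
  rw [hone, one_mul]

end SquareLift

theorem map_ringInverse {R S : Type*} [Ring R] [Ring S] {k : ℕ} (f : R →+* S)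
    (M : Matrix (Fin k) (Fin k) R) (h : IsUnit M) :
    (Ring.inverse M).map ⇑f = Ring.inverse (M.map ⇑f) := by
  have h2 : IsUnit (M.map ⇑f) := h.map f.mapMatrix
  have hmul : M.map ⇑f * (Ring.inverse M).map ⇑f = 1 := by
    rw [← Matrix.map_mul, Ring.mul_inverse_cancel _ h, Matrix.map_one _ (map_zero _) (map_one _)]
  calc (Ring.inverse M).map ⇑f
      = Ring.inverse (M.map ⇑f) * (M.map ⇑f * (Ring.inverse M).map ⇑f) := by
        rw [← mul_assoc, Ring.inverse_mul_cancel _ h2, one_mul]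
    _ = Ring.inverse (M.map ⇑f) := by rw [hmul, mul_one]

section MatStuff

attribute [local instance] Matrix.linftyOpNormedRing Matrix.linftyOpNormedAlgebra

variable {C D : Type*} [CStarAlgebra C] [CStarAlgebra D]

instance matComplC {n : ℕ} : @CompleteSpace (Matrix (Fin n) (Fin n) C)
    PseudoMetricSpace.toUniformSpace :=
  inferInstanceAs (CompleteSpace (Fin n → Fin n → C))

instance matGeomC {n : ℕ} : HasSummableGeomSeries (Matrix (Fin n) (Fin n) C) := inferInstance

noncomputable def gCLM (γ : C →⋆ₐ[ℂ] D) : C →L[ℂ] D :=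
  { toLinearMap := γ.toAlgHom.toLinearMap,
    cont := AddMonoidHomClass.continuous_of_bound γ 1
      (by simpa only [one_mul] using fun a => NonUnitalStarAlgHom.norm_apply_le γ a) }

theorem gCLM_apply (γ : C →⋆ₐ[ℂ] D) (x : C) : gCLM γ x = γ x := rfl

noncomputable def matT (γ : C →⋆ₐ[ℂ] D) (n : ℕ) :
    Matrix (Fin n) (Fin n) C →L[ℂ] Matrix (Fin n) (Fin n) D where
  toFun M := M.map ⇑(γ : C →+* D)
  map_add' M N := by
    ext i j
    simp [Matrix.map_apply]
  map_smul' c M := by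
    ext i j
    simp [Matrix.map_apply, RingHom.coe_coe, map_smul]
  cont := by
    show Continuous fun M : Matrix (Fin n) (Fin n) C => M.map ⇑(γ : C →+* D)
    refine continuous_matrix fun i j => ?_
    simp only [Matrix.map_apply, RingHom.coe_coe]
    exact (gCLM γ).continuous.comp (continuous_id.matrix_elem i j)

theorem matT_apply (γ : C →⋆ₐ[ℂ] D) {n : ℕ} (M : Matrix (Fin n) (Fin n) C) :
    matT γ n M = M.map ⇑(γ : C →+* D) := rfl

theorem matT_mul (γ : C →⋆ₐ[ℂ] D) {n : ℕ} (M N : Matrix (Fin n) (Fin n) C) :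
    matT γ n (M * N) = matT γ n M * matT γ n N := by
  simp only [matT_apply]
  exact Matrix.map_mul

theorem matT_one (γ : C →⋆ₐ[ℂ] D) {n : ℕ} : matT γ n 1 = 1 := by
  simp only [matT_apply]
  exact Matrix.map_one _ (map_zero _) (map_one _)

theorem mat_lift_bound (γ : C →⋆ₐ[ℂ] D) (n : ℕ) {K : ℝ} (hK : 0 ≤ K)
    (hl : ∀ y : D, ∃ x, γ x = y ∧ ‖x‖ ≤ K * ‖y‖) :
    ∀ Y : Matrix (Fin n) (Fin n) D, ∃ X : Matrix (Fin n) (Fin n) C,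
      matT γ n X = Y ∧ ‖X‖ ≤ K * ‖Y‖ := by
  intro Y
  choose c hc hcn using hl
  set X : Matrix (Fin n) (Fin n) C := Matrix.of fun i j => c (Y i j) with hX
  have hmap : matT γ n X = Y := by
    rw [matT_apply]
    ext i j
    simp [hX, Matrix.map_apply, RingHom.coe_coe, hc]
  refine ⟨X, hmap, ?_⟩
  set k : NNReal := ⟨K, hK⟩ with hk
  have hnn : ‖X‖₊ ≤ k * ‖Y‖₊ := by
    rw [Matrix.linfty_opNNNorm_def]
    refine Finset.sup_le fun i _ => ?_
    have h1 : ∀ j, ‖X i j‖₊ ≤ k * ‖Y i j‖₊ := by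
      intro j
      have h2 := hcn (Y i j)
      have h3 : (↑(k * ‖Y i j‖₊) : ℝ) = K * ‖Y i j‖ := by
        push_cast [hk]
        rfl
      rw [← NNReal.coe_le_coe, h3]
      exact h2
    calc ∑ j, ‖X i j‖₊ ≤ ∑ j, k * ‖Y i j‖₊ := Finset.sum_le_sum fun j _ => h1 j
      _ = k * ∑ j, ‖Y i j‖₊ := by rw [Finset.mul_sum]
      _ ≤ k * ‖Y‖₊ := by
          refine mul_le_mul_right ?_ k
          rw [Matrix.linfty_opNNNorm_def]
          exact Finset.le_sup (f := fun i => ∑ j, ‖Y i j‖₊) (Finset.mem_univ i)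
  calc ‖X‖ = (‖X‖₊ : ℝ) := rfl
    _ ≤ ((k * ‖Y‖₊ : NNReal) : ℝ) := NNReal.coe_le_coe.mpr hnn
    _ = K * ‖Y‖ := by push_cast [hk]; rfl

theorem mat_inverse_continuous {n : ℕ} {X : Type*} [TopologicalSpace X]
    (f : X → Matrix (Fin n) (Fin n) C) (h : Continuous f)
    (hu : ∀ x, IsUnit (f x)) : Continuous fun x => Ring.inverse (f x) := by
  rw [continuous_iff_continuousAt]
  intro x
  have h1 : ContinuousAt Ring.inverse (f x) := by
    have := NormedRing.inverse_continuousAt (hu x).unit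
    rwa [(hu x).unit_spec] at this
  exact h1.comp h.continuousAt

theorem matT_surj (γ : C →⋆ₐ[ℂ] D) (hγ : Function.Surjective γ) (n : ℕ) :
    ∃ K : ℝ, 0 ≤ K ∧ ∀ Y : Matrix (Fin n) (Fin n) D, ∃ X : Matrix (Fin n) (Fin n) C,
      matT γ n X = Y ∧ ‖X‖ ≤ K * ‖Y‖ := by
  obtain ⟨K, hKpos, hKl⟩ := (gCLM γ).exists_preimage_norm_le hγ
  exact ⟨K, hKpos.le, mat_lift_bound γ n hKpos.le hKl⟩

end MatStuff

theorem stab_map' {C D : Type*} [Ring C] [Ring D] {k : ℕ} (f : C →+* D)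
    (M : Matrix (Fin k) (Fin k) C) : (stab M).map ⇑f = stab (M.map ⇑f) := by
  rw [stab, stab, ← Matrix.submatrix_map]
  congr 1
  rw [Matrix.fromBlocks_map, Matrix.map_zero _ (map_zero f), Matrix.map_zero _ (map_zero f),
      Matrix.map_one _ (map_zero f) (map_one f)]

set_option maxHeartbeats 1000000 in
/-- **Theorem.** Let `γ : C → D` be a surjective unital *-homomorphism, and let
`n = m + 1 ≥ 2` be such that `π_1(GL_{n-1}(D)) → π_1(GL_n(D))` is surjective. Any loop
`g : [0,1] → GL_n(D)` at the identity lifts to a path `h : [0,1] → GL_n(C)` with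
`h(0) ∈ θ_C(GL_{n-1}(C))`, `h(1) = I_n` and `γ ∘ h = g`. -/
theorem loop_lifting {C D : Type*} [CStarAlgebra C] [CStarAlgebra D]
    (γ : C →⋆ₐ[ℂ] D) (hγ : Function.Surjective γ) (m : ℕ) (hm : 1 ≤ m)
    (hπ : pikSurj 1 D m)
    (g : ContinuousMap I (GLs (m + 1) D))
    (hg0 : g 0 = GLone (m + 1) D) (hg1 : g 1 = GLone (m + 1) D) :
    ∃ h : ContinuousMap I (GLs (m + 1) C),
      (∃ h0 : GLs m C, h 0 = stabGL h0) ∧ h 1 = GLone (m + 1) C ∧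
        ∀ t : I, mapGLs (γ : C →+* D) (h t) = g t := by
  classical
  -- the base loop as a generalized loop
  set bmap : C((Fin 1) → I, GLs (m + 1) D) := g.comp ⟨fun v => v 0, continuous_apply 0⟩
    with hbmap
  have hb : bmap ∈ GenLoop (Fin 1) (GLs (m + 1) D) (GLone (m + 1) D) := by
    intro y hy
    obtain ⟨i, hi⟩ := hy
    have hi0 : i = 0 := Subsingleton.elim _ _
    rw [hi0] at hi
    rcases hi with h | h
    · show g (y 0) = _
      rw [h, hg0]
    · show g (y 0) = _
      rw [h, hg1]
  obtain ⟨a, ha⟩ := hπ ⟨bmap, hb⟩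
  obtain ⟨Hom⟩ := ha
  have hmem0 : (fun (_ : Fin 1) => (0 : I)) ∈ Cube.boundary (Fin 1) := ⟨0, Or.inl rfl⟩
  have hmem1 : (fun (_ : Fin 1) => (1 : I)) ∈ Cube.boundary (Fin 1) := ⟨0, Or.inr rfl⟩
  -- the lower loop as a path
  set aP : I → Matrix (Fin m) (Fin m) D := fun t => (a.1 (fun _ => t) : GLs m D).1 with haP
  have haPcont : Continuous aP :=
    continuous_subtype_val.comp (a.1.continuous.comp (continuous_pi fun _ => continuous_id))
  have haPunit : ∀ t, IsUnit (aP t) := fun t => (a.1 _).2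
  have haP1 : aP 1 = 1 := by
    have h1 := a.2 _ hmem1
    rw [haP]
    simp only
    rw [h1]
    rfl
  -- lift the lower loop
  obtain ⟨K₁, hK₁, hKl₁⟩ := matT_surj γ hγ m
  obtain ⟨Ha, hHaU, hHaT, hHa1⟩ := square_lift (matT γ m) (matT_mul γ) (matT_one γ) hK₁ hKl₁
      ⟨fun p => aP p.2, haPcont.comp continuous_snd⟩ (fun p => haPunit p.2)
      ⟨fun _ => 1, continuous_const⟩ (fun _ => isUnit_one) (fun x => by
        show matT γ m 1 = aP 1
        rw [matT_one, haP1])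
  set at' : I → Matrix (Fin m) (Fin m) C := fun t => Ha ((0 : I), t) with hat
  have hatcont : Continuous at' :=
    Ha.continuous.comp (Continuous.prodMk continuous_const continuous_id)
  have hatunit : ∀ t, IsUnit (at' t) := fun t => hHaU _
  have hatT : ∀ t, matT γ m (at' t) = aP t := fun t => hHaT ((0 : I), t)
  have hat1 : at' 1 = 1 := hHa1 (0 : I)
  -- the homotopy as a square
  set F2 : C(I × I, Matrix (Fin (m + 1)) (Fin (m + 1)) D) :=
    ⟨fun p => (Hom (unitInterval.symm p.2, fun _ => p.1) : GLs (m + 1) D).1, by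
      refine continuous_subtype_val.comp (Hom.continuous.comp ?_)
      exact (unitInterval.continuous_symm.comp continuous_snd).prodMk
        (continuous_pi fun _ => continuous_fst)⟩ with hF2
  have hF2U : ∀ p, IsUnit (F2 p) := fun p => (Hom _).2
  have hF2time1 : ∀ x : I, F2 (x, 1) = stab (aP x) := by
    intro x
    show ((Hom (unitInterval.symm 1, fun _ => x) : GLs _ D)).1 = _
    rw [unitInterval.symm_one]
    rw [Hom.apply_zero (fun _ => x)]
    rfl
  -- lift the square
  obtain ⟨K₂, hK₂, hKl₂⟩ := matT_surj γ hγ (m + 1)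
  obtain ⟨H2, hH2U, hH2T, hH2e⟩ := square_lift (matT γ (m + 1)) (matT_mul γ) (matT_one γ)
      hK₂ hKl₂ F2 hF2U
      ⟨fun x => stab (at' x), continuous_stab.comp hatcont⟩
      (fun x => stab_isUnit (hatunit x)) (fun x => by
        show matT γ (m + 1) (stab (at' x)) = F2 (x, 1)
        rw [matT_apply, stab_map', hF2time1 x, ← matT_apply γ (at' x)]
        exact congrArg stab (hatT x))
  -- extract paths
  set w : I → Matrix (Fin (m + 1)) (Fin (m + 1)) C := fun t => H2 (t, 0) with hwdef
  have hwcont : Continuous w := H2.continuous.comp (continuous_id.prodMk continuous_const)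
  have hwunit : ∀ t, IsUnit (w t) := fun t => hH2U _
  have hwT : ∀ t, (w t).map ⇑(γ : C →+* D) = (g t).1 := by
    intro t
    have h1 := hH2T (t, 0)
    rw [matT_apply] at h1
    rw [hwdef]
    simp only
    rw [h1]
    show ((Hom (unitInterval.symm 0, fun _ => t) : GLs _ D)).1 = _
    rw [unitInterval.symm_zero, Hom.apply_one]
    rfl
  set pA : I → Matrix (Fin (m + 1)) (Fin (m + 1)) C := fun s => H2 ((0 : I), s) with hpA
  set pB : I → Matrix (Fin (m + 1)) (Fin (m + 1)) C := fun s => H2 ((1 : I), s) with hpB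
  have hpAcont : Continuous pA := H2.continuous.comp (continuous_const.prodMk continuous_id)
  have hpBcont : Continuous pB := H2.continuous.comp (continuous_const.prodMk continuous_id)
  have hpAunit : ∀ s, IsUnit (pA s) := fun s => hH2U _
  have hpBunit : ∀ s, IsUnit (pB s) := fun s => hH2U _
  have hbdryD : ∀ (s : I) (z : I), (fun _ : Fin 1 => z) ∈ Cube.boundary (Fin 1) →
      F2 (z, s) = 1 := by
    intro s z hz
    show ((Hom (unitInterval.symm s, fun _ => z) : GLs _ D)).1 = _
    rw [Hom.eq_fst _ hz]
    show (stabGL (a.1 (fun _ => z))).1 = _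
    rw [a.2 _ hz, stabGL_one]
    rfl
  have hpAT : ∀ s, (pA s).map ⇑(γ : C →+* D) = 1 := by
    intro s
    have h1 := hH2T ((0 : I), s)
    rw [matT_apply] at h1
    rw [hpA]
    simp only
    rw [h1]
    exact hbdryD s 0 hmem0
  have hpBT : ∀ s, (pB s).map ⇑(γ : C →+* D) = 1 := by
    intro s
    have h1 := hH2T ((1 : I), s)
    rw [matT_apply] at h1
    rw [hpB]
    simp only
    rw [h1]
    exact hbdryD s 1 hmem1
  have hpA1 : pA 1 = stab (at' 0) := hH2e (0 : I)
  have hpB1 : pB 1 = 1 := by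
    have := hH2e (1 : I)
    rw [hpB]
    simp only
    rw [this]
    show stab (at' 1) = 1
    rw [hat1, stab_one]
  -- the correcting paths
  set q1 : I → Matrix (Fin (m + 1)) (Fin (m + 1)) C :=
    fun s => Ring.inverse (w 0) * pA (unitInterval.symm s) with hq1
  set q2 : I → Matrix (Fin (m + 1)) (Fin (m + 1)) C :=
    fun s => Ring.inverse (pB (unitInterval.symm s)) with hq2
  have hq1cont : Continuous q1 :=
    continuous_const.matrix_mul (hpAcont.comp unitInterval.continuous_symm)
  have hq2cont : Continuous q2 :=
    mat_inverse_continuous _ (hpBcont.comp unitInterval.continuous_symm)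
      (fun s => hpBunit _)
  set path1 : Path (Ring.inverse (w 0) * stab (at' 0))
      (1 : Matrix (Fin (m + 1)) (Fin (m + 1)) C) :=
    { toFun := q1
      continuous_toFun := hq1cont
      source' := by
        show Ring.inverse (w 0) * pA (unitInterval.symm 0) = _
        rw [unitInterval.symm_zero, hpA1]
      target' := by
        show Ring.inverse (w 0) * pA (unitInterval.symm 1) = 1
        rw [unitInterval.symm_one]
        exact Ring.inverse_mul_cancel _ (hwunit 0) } with hpath1
  set path2 : Path (1 : Matrix (Fin (m + 1)) (Fin (m + 1)) C) (Ring.inverse (w 1)) :=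
    { toFun := q2
      continuous_toFun := hq2cont
      source' := by
        show Ring.inverse (pB (unitInterval.symm 0)) = 1
        rw [unitInterval.symm_zero, hpB1, Ring.inverse_one]
      target' := by
        show Ring.inverse (pB (unitInterval.symm 1)) = Ring.inverse (w 1)
        rw [unitInterval.symm_one] } with hpath2
  set κ : Path (Ring.inverse (w 0) * stab (at' 0)) (Ring.inverse (w 1)) :=
    path1.trans path2 with hκ
  have hq1prop : ∀ s, IsUnit (q1 s) ∧ (q1 s).map ⇑(γ : C →+* D) = 1 := by
    intro s
    constructor
    · exact (isUnit_ringInverse.mpr (hwunit 0)).mul (hpAunit _)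
    · rw [hq1]
      simp only
      rw [Matrix.map_mul, map_ringInverse _ _ (hwunit 0), hwT 0, hg0, hpAT]
      show Ring.inverse (1 : Matrix (Fin (m + 1)) (Fin (m + 1)) D) * 1 = 1
      rw [Ring.inverse_one, one_mul]
  have hq2prop : ∀ s, IsUnit (q2 s) ∧ (q2 s).map ⇑(γ : C →+* D) = 1 := by
    intro s
    constructor
    · exact isUnit_ringInverse.mpr (hpBunit _)
    · rw [hq2]
      simp only
      rw [map_ringInverse _ _ (hpBunit _), hpBT, Ring.inverse_one]
  have hκprop : ∀ t, IsUnit (κ t) ∧ (κ t).map ⇑(γ : C →+* D) = 1 := by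
    intro t
    rw [hκ, Path.trans_apply]
    split_ifs with h
    · exact hq1prop _
    · exact hq2prop _
  -- assemble
  refine ⟨⟨fun t => ⟨w t * κ t, (hwunit t).mul (hκprop t).1⟩, ?_⟩, ?_, ?_, ?_⟩
  · exact Continuous.subtype_mk (hwcont.matrix_mul κ.continuous) _
  · refine ⟨⟨at' 0, hatunit 0⟩, ?_⟩
    apply Subtype.ext
    show w 0 * κ 0 = stab (at' 0)
    rw [κ.source, ← mul_assoc, Ring.mul_inverse_cancel _ (hwunit 0), one_mul]
  · apply Subtype.ext
    show w 1 * κ 1 = 1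
    rw [κ.target]
    exact Ring.mul_inverse_cancel _ (hwunit 1)
  · intro t
    apply Subtype.ext
    show (w t * κ t).map ⇑(γ : C →+* D) = (g t).1
    rw [Matrix.map_mul, hwT t, (hκprop t).2, mul_one]

end
end
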